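/- arXiv:0708.1675 — 5 statements merged into one kernel-verified Lean document; each statement's English description precedes it below -/
import Mathlib

section
/- If a permutation π ∈ S_n is written as π = t_{n−1}^{k_{n−1}} t_{n−2}^{k_{n−2}} ⋯ t_1^{k_1} with 0 ≤ k_i < i+1 for all 1 ≤ i ≤ n−1, then maj(π) = k_1 + k_2 + ⋯ + k_{n−1}. -/
/-- `swapNat n j` is the adjacent transposition `s_{j+1}` (the swap of the 1-indexed
letters `j+1` and `j+2`, i.e. of the `Fin n` indices `j` and `j+1`). -/
def swapNat (n j : ℕ) : Equiv.Perm (Fin n) :=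
  if h : j + 1 < n then Equiv.swap ⟨j, Nat.lt_of_succ_lt h⟩ ⟨j + 1, h⟩ else 1

/-- `tcyc n i` is the cycle `t_i = s_i s_{i-1} ⋯ s_1 = (i+1, i, …, 1)`
(sending `i+1 ↦ i ↦ ⋯ ↦ 1 ↦ i+1`); `tcyc n 0` is the identity. -/
def tcyc (n i : ℕ) : Equiv.Perm (Fin n) :=
  ((List.range i).reverse.map (swapNat n)).prod

/-- The major index of `π ∈ S_n`: the sum of the descents of `π`, i.e. of the 1-indexed
positions `1 ≤ i ≤ n-1` with `π(i) > π(i+1)`. -/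
def majPerm (n : ℕ) (π : Equiv.Perm (Fin n)) : ℕ :=
  ∑ i : Fin (n - 1),
    if π ⟨i.val + 1, by have := i.isLt; omega⟩ < π ⟨i.val, by have := i.isLt; omega⟩ then
      i.val + 1
    else 0

lemma swapNat_apply (n j : ℕ) (h : j + 1 < n) (x : Fin n) :
    (swapNat n j x).val = if x.val = j then j + 1 else if x.val = j + 1 then j else x.val := by
  rw [swapNat, dif_pos h]
  rcases x with ⟨v, hv⟩
  simp only [Equiv.swap_apply_def, Fin.ext_iff]
  split_ifs <;> simp_all

lemma tcyc_succ (n i : ℕ) : tcyc n (i + 1) = swapNat n i * tcyc n i := by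
  simp [tcyc, List.range_succ]

lemma tcyc_apply (n i : ℕ) (hi : i < n) (x : Fin n) :
    (tcyc n i x).val = if x.val = 0 then i else if x.val ≤ i then x.val - 1 else x.val := by
  induction i with
  | zero =>
    simp only [tcyc, List.range_zero, List.reverse_nil, List.map_nil, List.prod_nil,
      Equiv.Perm.coe_one, id_eq]
    split_ifs <;> omega
  | succ i ih =>
    rw [tcyc_succ, Equiv.Perm.mul_apply, swapNat_apply n i hi]
    have h2 := ih (by omega)
    have h3 := (tcyc n i x).isLt
    have h4 := x.isLt
    split_ifs at h2 ⊢ <;> omega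

lemma tcyc_pow_apply (n i k : ℕ) (hi : i < n) (hk : k ≤ i) (x : Fin n) :
    ((tcyc n i ^ k) x).val =
      if x.val ≤ i then (if k ≤ x.val then x.val - k else x.val + i + 1 - k) else x.val := by
  induction k with
  | zero =>
    simp only [pow_zero, Equiv.Perm.coe_one, id_eq]
    split_ifs <;> omega
  | succ k ih =>
    rw [pow_succ', Equiv.Perm.mul_apply]
    have h2 := ih (by omega)
    rw [tcyc_apply n i hi]
    have h3 := ((tcyc n i ^ k) x).isLt
    have h4 := x.isLt
    split_ifs at h2 ⊢ <;> omega

def valAt (n : ℕ) (π : Equiv.Perm (Fin n)) (x : ℕ) : ℕ :=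
  if h : x < n then (π ⟨x, h⟩).val else x

lemma valAt_of_lt (n : ℕ) (π : Equiv.Perm (Fin n)) {x : ℕ} (h : x < n) :
    valAt n π x = (π ⟨x, h⟩).val := dif_pos h

lemma majPerm_eq (n : ℕ) (π : Equiv.Perm (Fin n)) :
    majPerm n π = ∑ p ∈ Finset.range (n - 1),
      if valAt n π (p + 1) < valAt n π p then p + 1 else 0 := by
  rw [majPerm, ← Fin.sum_univ_eq_sum_range
    (fun p => if valAt n π (p + 1) < valAt n π p then p + 1 else 0) (n - 1)]
  refine Finset.sum_congr rfl fun i _ => ?_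
  have h1 : i.val + 1 < n := by have := i.isLt; omega
  rw [valAt_of_lt n π h1, valAt_of_lt n π (by omega)]
  rfl

lemma sum_ind (n k : ℕ) (hk : k ≤ n) :
    (∑ p ∈ Finset.range n, if p < k then 1 else 0) = k := by
  induction n with
  | zero => simp; omega
  | succ n ih =>
    rw [Finset.sum_range_succ]
    rcases Nat.lt_or_ge k (n + 1) with h | h
    · rw [ih (by omega), if_neg (by omega)]; omega
    · have hkn : k = n + 1 := by omega
      subst hkn
      have hall : ∀ p ∈ Finset.range n, (if p < n + 1 then (1:ℕ) else 0) = 1 := by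
        intro p hp
        exact if_pos (by have := Finset.mem_range.mp hp; omega)
      rw [if_pos (by omega), Finset.sum_congr rfl hall, Finset.sum_const, Finset.card_range,
        smul_eq_mul, mul_one]

lemma count_lt (n k : ℕ) (hk : k ≤ n) (σ : Equiv.Perm (Fin n)) :
    (∑ p ∈ Finset.range n, if valAt n σ p < k then 1 else 0) = k := by
  rw [← Fin.sum_univ_eq_sum_range (fun p => if valAt n σ p < k then 1 else 0) n]
  have h1 : ∀ x : Fin n, (if valAt n σ x.val < k then 1 else 0)
      = (if (σ x).val < k then 1 else 0) := by
    intro x; rw [valAt_of_lt n σ x.isLt]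
  calc (∑ x : Fin n, if valAt n σ x.val < k then 1 else 0)
      = ∑ x : Fin n, (if (σ x).val < k then 1 else 0) :=
        Finset.sum_congr rfl fun x _ => h1 x
    _ = ∑ y : Fin n, (if y.val < k then 1 else 0) :=
        Equiv.sum_comp σ (fun y : Fin n => if y.val < k then 1 else 0)
    _ = ∑ p ∈ Finset.range n, (if p < k then 1 else 0) :=
        Fin.sum_univ_eq_sum_range (fun p => if p < k then 1 else 0) n
    _ = k := sum_ind n k hk

lemma maj_step (n m k : ℕ) (σ : Equiv.Perm (Fin n)) (hm : m < n) (hk : k ≤ m)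
    (hσ : ∀ x : Fin n, m ≤ x.val → σ x = x) :
    majPerm n (tcyc n m ^ k * σ) = majPerm n σ + k := by
  set a : ℕ → ℕ := valAt n σ with ha
  set b : ℕ → ℕ := valAt n (tcyc n m ^ k * σ) with hb
  -- basic facts about a
  have fa_lt : ∀ p, p < n → a p < n := by
    intro p hp; rw [ha, valAt_of_lt n σ hp]; exact (σ _).isLt
  have fa_fix : ∀ p, p < n → m ≤ p → a p = p := by
    intro p hp hmp
    rw [ha, valAt_of_lt n σ hp, hσ ⟨p, hp⟩ hmp]
  have fa_small : ∀ p, p < m → a p < m := by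
    intro p hp
    by_contra hge
    push_neg at hge
    have h1 : σ ⟨p, by omega⟩ = σ (σ ⟨p, by omega⟩) := by
      rw [hσ (σ ⟨p, by omega⟩) (by rw [ha, valAt_of_lt n σ (by omega : p < n)] at hge; exact hge)]
    have h2 := σ.injective h1
    rw [ha, valAt_of_lt n σ (by omega : p < n)] at hge
    have : p = ((σ ⟨p, by omega⟩ : Fin n) : ℕ) := by rw [← h2]
    omega
  have fa_inj : ∀ p q, p < n → q < n → a p = a q → p = q := by
    intro p q hp hq h
    rw [ha, valAt_of_lt n σ hp, valAt_of_lt n σ hq] at h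
    have := σ.injective (Fin.val_injective h)
    exact congrArg Fin.val this
  -- formula for b
  have fb : ∀ p, p < n →
      b p = if a p ≤ m then (if k ≤ a p then a p - k else a p + m + 1 - k) else a p := by
    intro p hp
    rw [hb, valAt_of_lt n _ hp, Equiv.Perm.mul_apply, tcyc_pow_apply n m k hm hk,
      ha, valAt_of_lt n σ hp]
  -- the indicator
  set F : ℕ → ℕ := fun p => if a p < k then 1 else 0 with hF
  have key : ∀ p ∈ Finset.range (n - 1),
      ((if b (p + 1) < b p then p + 1 else 0) + (p + 1) * F (p + 1))
      = ((if a (p + 1) < a p then p + 1 else 0) + (p + 1) * F p) := by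
    intro p hp
    have hp1 : p + 1 < n := by have := Finset.mem_range.mp hp; omega
    have h1 := fb p (by omega)
    have h2 := fb (p + 1) hp1
    have h3 := fa_lt p (by omega)
    have h4 := fa_lt (p + 1) hp1
    have h5 : a p ≠ a (p + 1) := fun h => by have := fa_inj p (p+1) (by omega) hp1 h; omega
    have h6 : m ≤ p → a p = p := fa_fix p (by omega)
    have h7 : m ≤ p + 1 → a (p + 1) = p + 1 := fa_fix (p + 1) hp1
    have h8 : p < m → a p < m := fa_small p
    have h9 : p + 1 < m → a (p + 1) < m := fa_small (p + 1)
    rw [hF]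
    simp only [h1, h2]
    split_ifs <;> omega
  have hsum := Finset.sum_congr rfl key
  rw [Finset.sum_add_distrib, Finset.sum_add_distrib] at hsum
  rw [majPerm_eq, majPerm_eq]
  -- identify the two maj sums
  have hb' : (∑ p ∈ Finset.range (n-1), if valAt n (tcyc n m ^ k * σ) (p+1) < valAt n (tcyc n m ^ k * σ) p then p + 1 else 0)
      = ∑ p ∈ Finset.range (n-1), (if b (p+1) < b p then p + 1 else 0) := rfl
  have ha' : (∑ p ∈ Finset.range (n-1), if valAt n σ (p+1) < valAt n σ p then p + 1 else 0)
      = ∑ p ∈ Finset.range (n-1), (if a (p+1) < a p then p + 1 else 0) := rfl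
  rw [hb', ha']
  -- now the telescoping part
  have hn1 : 1 ≤ n := by omega
  set G : ℕ → ℕ := fun p => p * F p with hG
  have hFtop : F (n - 1) = 0 := by
    rw [hF]
    simp only
    rw [if_neg]
    push_neg
    have : a (n-1) = n - 1 := fa_fix (n-1) (by omega) (by omega)
    omega
  have hcount : (∑ p ∈ Finset.range (n - 1), F p) = k := by
    have h0 : (∑ p ∈ Finset.range n, F p) = k := count_lt n k (by omega) σ
    rcases Nat.exists_eq_add_of_le hn1 with ⟨n', rfl⟩
    rw [Nat.add_sub_cancel_left] at *
    rw [Nat.add_comm 1 n', Finset.sum_range_succ] at h0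
    omega
  have hshift : (∑ p ∈ Finset.range (n - 1), (p + 1) * F (p + 1))
      = ∑ p ∈ Finset.range (n - 1), p * F p := by
    have e1 : (∑ p ∈ Finset.range n, G p)
        = (∑ p ∈ Finset.range (n-1), G (p + 1)) + G 0 := by
      rcases Nat.exists_eq_add_of_le hn1 with ⟨n', rfl⟩
      rw [Nat.add_sub_cancel_left, Nat.add_comm 1 n']
      exact Finset.sum_range_succ' G n'
    have e2 : (∑ p ∈ Finset.range n, G p)
        = (∑ p ∈ Finset.range (n-1), G p) + G (n - 1) := by
      rcases Nat.exists_eq_add_of_le hn1 with ⟨n', rfl⟩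
      rw [Nat.add_sub_cancel_left, Nat.add_comm 1 n']
      exact Finset.sum_range_succ G n'
    have e3 : G (n - 1) = 0 := by rw [hG]; simp only; rw [hFtop, mul_zero]
    have e4 : G 0 = 0 := by rw [hG]; simp only [zero_mul]
    have : (∑ p ∈ Finset.range (n-1), G (p + 1)) = ∑ p ∈ Finset.range (n-1), G p := by omega
    exact this
  have hmul : (∑ p ∈ Finset.range (n - 1), (p + 1) * F p)
      = (∑ p ∈ Finset.range (n - 1), p * F p) + k := by
    rw [← hcount, ← Finset.sum_add_distrib]
    exact Finset.sum_congr rfl fun p _ => by ring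
  omega

lemma valAt_one (n x : ℕ) : valAt n (1 : Equiv.Perm (Fin n)) x = x := by
  unfold valAt; split <;> simp

lemma majPerm_one (n : ℕ) : majPerm n (1 : Equiv.Perm (Fin n)) = 0 := by
  rw [majPerm_eq]
  refine Finset.sum_eq_zero fun p _ => ?_
  rw [valAt_one, valAt_one, if_neg (by omega)]

lemma tcyc_pow_fix (n i k : ℕ) (hi : i < n) (hk : k ≤ i) (x : Fin n) (hx : i < x.val) :
    (tcyc n i ^ k) x = x := by
  apply Fin.val_injective
  rw [tcyc_pow_apply n i k hi hk, if_neg (by omega)]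

lemma main_aux (n : ℕ) (k : ℕ → ℕ)
    (hk : ∀ i : ℕ, 1 ≤ i → i ≤ n - 1 → k i < i + 1) :
    ∀ m, m ≤ n - 1 →
      (∀ x : Fin n, m + 1 ≤ x.val →
        (((List.range m).reverse.map fun i => tcyc n (i + 1) ^ k (i + 1)).prod) x = x) ∧
      majPerm n (((List.range m).reverse.map fun i => tcyc n (i + 1) ^ k (i + 1)).prod)
        = ∑ i ∈ Finset.range m, k (i + 1) := by
  intro m
  induction m with
  | zero =>
    intro _
    simp only [List.range_zero, List.reverse_nil, List.map_nil, List.prod_nil,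
      Finset.range_zero, Finset.sum_empty]
    exact ⟨fun x _ => rfl, majPerm_one n⟩
  | succ m ih =>
    intro hmn
    obtain ⟨ihfix, ihmaj⟩ := ih (by omega)
    have hm1 : m + 1 < n := by omega
    have hkm : k (m + 1) ≤ m + 1 := by
      have := hk (m + 1) (by omega) (by omega); omega
    have hprod : ((List.range (m+1)).reverse.map fun i => tcyc n (i + 1) ^ k (i + 1)).prod
        = tcyc n (m + 1) ^ k (m + 1)
          * ((List.range m).reverse.map fun i => tcyc n (i + 1) ^ k (i + 1)).prod := by
      simp [List.range_succ]
    rw [hprod]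
    constructor
    · intro x hx
      rw [Equiv.Perm.mul_apply, ihfix x (by omega)]
      exact tcyc_pow_fix n (m + 1) (k (m + 1)) hm1 hkm x (by omega)
    · rw [maj_step n (m + 1) (k (m + 1)) _ hm1 hkm ihfix, ihmaj, Finset.sum_range_succ]

/-- If `π = t_{n-1}^{k_{n-1}} ⋯ t_1^{k_1}` with `0 ≤ k_i < i+1` for all
`1 ≤ i ≤ n-1`, then `maj(π) = k_1 + k_2 + ⋯ + k_{n-1}`. -/
theorem majPerm_eq_sum_exponents (n : ℕ) (k : ℕ → ℕ)
    (hk : ∀ i : ℕ, 1 ≤ i → i ≤ n - 1 → k i < i + 1) :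
    majPerm n (((List.range (n - 1)).reverse.map fun i => tcyc n (i + 1) ^ k (i + 1)).prod)
      = ∑ i ∈ Finset.range (n - 1), k (i + 1) := by
  exact (main_aux n k hk (n - 1) le_rfl).2
end

section
/- The sequence (τ_{n−1}, τ_{n−2}, …, τ_1, τ_0) is a perfect basis for the wreath product G(r,n): every element π ∈ G(r,n) has a unique presentation π = τ_{n−1}^{k_{n−1}} ⋯ τ_1^{k_1} τ_0^{k_0} with 0 ≤ k_i < r(i+1) for all 0 ≤ i ≤ n−1, and the order of τ_i equals r(i+1). -/
/-!
On the first `i + 1` letters `τ_i` acts as an `(i+1)`-cycle carrying a single unit of colour,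
so `τ_i ^ (i+1)` is the diagonal element with colour `1` on those letters and the identity
permutation. Hence `τ_i ^ e` fixes the letter `i + 1` with colour `0` there only when
`r (i+1) ∣ e`: this gives the order of `τ_i`, and shows that `⟨τ_i⟩` meets the copy of
`G(r, i)` fixing the letters `i + 1, …, n` trivially. Peeling off `τ_{n-1}, τ_{n-2}, …`
in turn, `k ↦ τ_{n-1}^{k_{n-1}} ⋯ τ_0^{k_0}` is injective on the box `∏ [0, r (i+1))`,
which has `r^n n! = |G(r,n)|` elements.
-/

/-- `prodPow a k` is the ordered product `a 0 ^ k 0 * a 1 ^ k 1 * ⋯ * a (n-1) ^ k (n-1)`. -/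
def prodPow {G : Type*} [Group G] {n : ℕ} (a : Fin n → G) (k : Fin n → ℕ) : G :=
  (List.ofFn fun i => a i ^ k i).prod

/-- The sequence `a` gives a unique presentation `g = a 0 ^ k 0 * ⋯ * a (n-1) ^ k (n-1)`
with `0 ≤ k i < m i` for every element `g` of the group. -/
def IsUniqueProd {G : Type*} [Group G] {n : ℕ} (a : Fin n → G) (m : Fin n → ℕ) : Prop :=
  ∀ g : G, ∃! k : (i : Fin n) → Fin (m i), g = prodPow a fun i => (k i : ℕ)

/-- A perfect basis: every group element has a unique presentation with each exponent
below the order of the corresponding basis element. -/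
def IsPerfectBasis {G : Type*} [Group G] {n : ℕ} (a : Fin n → G) : Prop :=
  IsUniqueProd a fun i => orderOf (a i)

/-- The wreath product `G(r,n) = Z_r ≀ S_n`: pairs `((c_1,…,c_n); π)` with `c_i ∈ Z_r`,
`π ∈ S_n`. -/
@[ext]
structure WreathZ (r n : ℕ) where
  c : Fin n → ZMod r
  pi : Equiv.Perm (Fin n)

namespace WreathZ

variable {r n : ℕ}

instance : Mul (WreathZ r n) :=
  ⟨fun x y => ⟨fun i => x.c i + y.c (x.pi⁻¹ i), x.pi * y.pi⟩⟩

instance : One (WreathZ r n) := ⟨⟨0, 1⟩⟩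

instance : Inv (WreathZ r n) := ⟨fun x => ⟨fun i => -x.c (x.pi i), x.pi⁻¹⟩⟩

@[simp] lemma mul_c (x y : WreathZ r n) : (x * y).c = fun i => x.c i + y.c (x.pi⁻¹ i) := rfl
@[simp] lemma mul_pi (x y : WreathZ r n) : (x * y).pi = x.pi * y.pi := rfl
@[simp] lemma one_c : (1 : WreathZ r n).c = 0 := rfl
@[simp] lemma one_pi : (1 : WreathZ r n).pi = 1 := rfl
@[simp] lemma inv_c (x : WreathZ r n) : x⁻¹.c = fun i => -x.c (x.pi i) := rfl
@[simp] lemma inv_pi (x : WreathZ r n) : x⁻¹.pi = x.pi⁻¹ := rfl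

instance : Group (WreathZ r n) where
  mul_assoc x y z := by
    ext i
    · simp [add_assoc, Equiv.Perm.mul_apply]
    · simp [mul_assoc]
  one_mul x := by ext i <;> simp
  mul_one x := by ext i <;> simp
  inv_mul_cancel x := by
    ext i
    · simp [Equiv.Perm.mul_apply]
    · simp

end WreathZ


/-- `tau r n i = τ_i = ((1, 0, …, 0); t_i) ∈ G(r,n)`. -/
def tau (r n i : ℕ) : WreathZ r n :=
  ⟨fun j => if j.val = 0 then 1 else 0, tcyc n i⟩

open Finset Equiv

section ProdPow

variable {G : Type*} [Group G]

theorem prodPow_succ {n : ℕ} (a : Fin (n + 1) → G) (k : Fin (n + 1) → ℕ) :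
    prodPow a k = a 0 ^ k 0 * prodPow (Fin.tail a) (Fin.tail k) := by
  simp only [prodPow, List.ofFn_succ, List.prod_cons, Fin.tail]

theorem prodPow_mem {n : ℕ} {K : Subgroup G} {a : Fin n → G} (ha : ∀ j, a j ∈ K)
    (k : Fin n → ℕ) : prodPow a k ∈ K :=
  K.list_prod_mem fun _ hx => by
    obtain ⟨j, rfl⟩ := List.mem_ofFn.mp hx
    exact K.pow_mem (ha j) _

theorem eq_of_pow_mul_eq_pow_mul {K : Subgroup G} {a : G} {m : ℕ}
    (hm : ∀ e, a ^ e ∈ K → m ∣ e) {k k' : ℕ} (hk : k < m) (hk' : k' < m) {x x' : G}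
    (hx : x ∈ K) (hx' : x' ∈ K) (h : a ^ k * x = a ^ k' * x') : k = k' := by
  wlog hle : k' ≤ k generalizing k k' x x'
  · exact (this hk' hk hx' hx h.symm (le_of_not_ge hle)).symm
  rw [← Nat.add_sub_cancel' hle, pow_add, mul_assoc] at h
  have hmem : a ^ (k - k') ∈ K := by
    rw [eq_mul_inv_of_mul_eq (mul_left_cancel h)]
    exact K.mul_mem hx' (K.inv_mem hx)
  have := Nat.eq_zero_of_dvd_of_lt (hm _ hmem) (by omega)
  omega

theorem prodPow_injective {n : ℕ} (a : Fin n → G) (m : Fin n → ℕ) (K : ℕ → Subgroup G)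
    (hK : Antitone K) (ha : ∀ j : Fin n, a j ∈ K j)
    (hm : ∀ (j : Fin n) e, a j ^ e ∈ K (j + 1) → m j ∣ e) :
    Function.Injective fun k : (j : Fin n) → Fin (m j) => prodPow a fun j => (k j : ℕ) := by
  induction n generalizing K with
  | zero => exact fun _ _ _ => Subsingleton.elim _ _
  | succ n ih =>
    intro k k' h
    dsimp only at h
    rw [prodPow_succ, prodPow_succ] at h
    have htail : ∀ k : Fin n → ℕ, prodPow (Fin.tail a) k ∈ K 1 :=
      prodPow_mem fun j => hK (show 1 ≤ (j.succ : ℕ) by simp) (ha j.succ)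
    have hhead : k 0 = k' 0 :=
      Fin.ext <| eq_of_pow_mul_eq_pow_mul (hm 0) (k 0).2 (k' 0).2 (htail _) (htail _) h
    have hrest : Fin.tail k = Fin.tail k' :=
      ih (Fin.tail a) (Fin.tail m) (fun j => K (j + 1)) (fun _ _ h => hK (by omega))
        (fun j => ha j.succ) (fun j => hm j.succ) (by rw [hhead] at h; exact mul_left_cancel h)
    rw [← Fin.cons_self_tail k, ← Fin.cons_self_tail k', hhead, hrest]

theorem isUniqueProd_of_injective [Finite G] {n : ℕ} {a : Fin n → G} {m : Fin n → ℕ}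
    (hinj : Function.Injective fun k : (j : Fin n) → Fin (m j) => prodPow a fun j => (k j : ℕ))
    (hcard : Nat.card G = ∏ j, m j) : IsUniqueProd a m := by
  have hbij := hinj.bijective_of_nat_card_le (by simp [hcard])
  intro g
  simpa only [eq_comm] using hbij.existsUnique g

theorem isPerfectBasis_of_isUniqueProd {n : ℕ} {a : Fin n → G} {m : Fin n → ℕ}
    (h : IsUniqueProd a m) (hm : ∀ j, orderOf (a j) = m j) : IsPerfectBasis a := by
  rwa [IsPerfectBasis, funext hm]

end ProdPow

namespace Fin

variable {n : ℕ}

theorem val_cycleRange (i j : Fin n) :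
    (cycleRange i j : ℕ) = if j < i then (j : ℕ) + 1 else if j = i then 0 else (j : ℕ) := by
  rcases lt_trichotomy j i with h | rfl | h
  · simp [coe_cycleRange_of_lt h, h]
  · simp [coe_cycleRange_of_le le_rfl]
  · simp [cycleRange_of_gt h, h.ne', not_lt.mpr h.le]

theorem cycleRange_eq_cycleRange_mul_swap {i j : Fin n} (hij : (j : ℕ) = i + 1) :
    cycleRange j = cycleRange i * swap i j := by
  ext x
  simp only [Perm.mul_apply, swap_apply_def, val_cycleRange, Fin.ext_iff, Fin.lt_def]
  split_ifs <;> omega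

theorem val_cycleRange_pow_of_le {i j : Fin n} (h : j ≤ i) (l : ℕ) :
    ((cycleRange i ^ l) j : ℕ) = (j + l) % (i + 1) := by
  induction l with
  | zero => simp [Nat.mod_eq_of_lt (Nat.lt_succ_of_le h)]
  | succ l ih =>
    have hle : ((cycleRange i ^ l) j : ℕ) ≤ i := by
      rw [ih]; exact Nat.lt_succ_iff.mp (Nat.mod_lt _ (Nat.succ_pos i))
    rw [pow_succ', Perm.mul_apply, val_cycleRange, ← add_assoc, ← Nat.mod_add_mod, ← ih]
    split_ifs with h₁ h₂
    · rw [Nat.mod_eq_of_lt (Nat.succ_lt_succ (Fin.lt_def.mp h₁))]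
    · rw [h₂, Nat.mod_self]
    · simp only [Fin.lt_def, Fin.ext_iff] at h₁ h₂; omega

theorem cycleRange_pow_of_gt {i j : Fin n} (h : i < j) (l : ℕ) : (cycleRange i ^ l) j = j :=
  Perm.pow_apply_eq_self_of_apply_eq_self (cycleRange_of_gt h) l

theorem cycleRange_pow_succ (i : Fin n) : cycleRange i ^ ((i : ℕ) + 1) = 1 := by
  ext j
  rcases le_or_gt j i with h | h
  · rw [val_cycleRange_pow_of_le h, Nat.add_mod_right, Nat.mod_eq_of_lt (by omega),
      Perm.one_apply]
  · rw [cycleRange_pow_of_gt h, Perm.one_apply]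

end Fin

theorem Nat.card_filter_range_mul_add_mod_eq_zero {m j : ℕ} (hj : j < m) (q : ℕ) :
    #{l ∈ range (q * m) | (j + l) % m = 0} = q := by
  have hiff : ∀ l, (j + l) % m = 0 ↔ l ≡ m - j [MOD m] := fun l => by
    rw [← (Nat.ModEq.refl j).add_iff_left, Nat.add_sub_cancel' hj.le, Nat.ModEq, Nat.mod_self]
  simp_rw [hiff, ← Nat.count_eq_card_filter_range]
  rw [Nat.count_modEq_card _ (by omega), Nat.mul_div_cancel _ (by omega), Nat.mul_mod_left,
    if_neg (Nat.not_lt_zero _), add_zero]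

namespace WreathZ

variable {r n : ℕ}

@[simp] theorem pow_pi (x : WreathZ r n) (e : ℕ) : (x ^ e).pi = x.pi ^ e := by
  induction e with
  | zero => rfl
  | succ e ih => rw [pow_succ, mul_pi, ih, pow_succ]

theorem pow_c (x : WreathZ r n) (e : ℕ) (j : Fin n) :
    (x ^ e).c j = ∑ l ∈ range e, x.c ((x.pi⁻¹ ^ l) j) := by
  induction e generalizing j with
  | zero => rfl
  | succ e ih =>
    rw [pow_succ', mul_c]
    dsimp only
    rw [ih, sum_range_succ', pow_zero, Perm.one_apply, add_comm]
    simp only [pow_succ, Perm.mul_apply]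

def equivProd : WreathZ r n ≃ (Fin n → ZMod r) × Perm (Fin n) where
  toFun g := (g.c, g.pi)
  invFun p := ⟨p.1, p.2⟩

instance [NeZero r] : Finite (WreathZ r n) := Finite.of_equiv _ equivProd.symm

theorem card_eq [NeZero r] : Nat.card (WreathZ r n) = r ^ n * n.factorial := by
  simp [Nat.card_congr equivProd, Fintype.card_perm]

/-- A copy of `G(r, M)` inside `G(r, n)`. -/
def fixAbove (M : ℕ) : Subgroup (WreathZ r n) where
  carrier := {g | ∀ j : Fin n, M ≤ j → g.pi j = j ∧ g.c j = 0}
  one_mem' _ _ := ⟨rfl, rfl⟩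
  mul_mem' {x y} hx hy j hj := by
    obtain ⟨hxj, hxc⟩ := hx j hj
    obtain ⟨hyj, hyc⟩ := hy j hj
    have hxj' : x.pi⁻¹ j = j := Perm.inv_eq_iff_eq.mpr hxj.symm
    exact ⟨by simp [Perm.mul_apply, hyj, hxj], by simp [hxj', hxc, hyc]⟩
  inv_mem' {x} hx j hj := by
    obtain ⟨hxj, hxc⟩ := hx j hj
    exact ⟨Perm.inv_eq_iff_eq.mpr hxj.symm, by simp [hxj, hxc]⟩

theorem fixAbove_mono : Monotone (fixAbove (r := r) (n := n)) :=
  fun _ _ hMM' _ hg j hj => hg j (hMM'.trans hj)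

end WreathZ

open WreathZ

theorem tcyc_eq_cycleRange_inv {n i : ℕ} (hi : i < n) :
    tcyc n i = (Fin.cycleRange ⟨i, hi⟩)⁻¹ := by
  induction i with
  | zero => simp [tcyc]
  | succ i ih =>
    rw [tcyc, List.range_succ, List.reverse_append, List.map_append, List.prod_append, ← tcyc,
      ih (by omega),
      Fin.cycleRange_eq_cycleRange_mul_swap (i := ⟨i, by omega⟩) (j := ⟨i + 1, hi⟩) rfl]
    simp [swapNat, hi]

section Tau

variable {r n i : ℕ}

theorem tau_pi_inv (hi : i < n) : (tau r n i).pi⁻¹ = Fin.cycleRange ⟨i, hi⟩ := by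
  simp [tau, tcyc_eq_cycleRange_inv hi]

theorem tau_mem_fixAbove {M : ℕ} (hiM : i < M) : tau r n i ∈ fixAbove M := by
  intro j hj
  have hij : (⟨i, by omega⟩ : Fin n) < j := by simp [Fin.lt_def]; omega
  refine ⟨?_, if_neg (by omega)⟩
  rw [tau, tcyc_eq_cycleRange_inv (by omega), Perm.inv_eq_iff_eq, Fin.cycleRange_of_gt hij]

theorem tau_pow_c_of_le (hi : i < n) (e : ℕ) {j : Fin n} (hj : (j : ℕ) ≤ i) :
    (tau r n i ^ e).c j = (#{l ∈ range e | (j + l) % (i + 1) = 0} : ℕ) := by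
  have hj' : j ≤ ⟨i, hi⟩ := Fin.le_def.mpr hj
  rw [pow_c, tau_pi_inv hi]
  simp only [tau, Fin.val_cycleRange_pow_of_le hj', sum_boole]

theorem tau_pow_c_of_gt (hi : i < n) (e : ℕ) {j : Fin n} (hj : i < (j : ℕ)) :
    (tau r n i ^ e).c j = 0 := by
  have hj' : ⟨i, hi⟩ < j := Fin.lt_def.mpr hj
  rw [pow_c, tau_pi_inv hi]
  simp only [tau, Fin.cycleRange_pow_of_gt hj']
  exact sum_eq_zero fun _ _ => if_neg (by omega)

theorem tau_pow_mul_succ (hi : i < n) (q : ℕ) :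
    tau r n i ^ (q * (i + 1)) = ⟨fun j => if (j : ℕ) ≤ i then (q : ZMod r) else 0, 1⟩ := by
  ext j
  · dsimp only
    split_ifs with hj
    · rw [tau_pow_c_of_le hi _ hj,
        Nat.card_filter_range_mul_add_mod_eq_zero (Nat.lt_succ_of_le hj)]
    · exact tau_pow_c_of_gt hi _ (by omega)
  · rw [pow_pi, ← inv_inv (tau r n i).pi, tau_pi_inv hi, inv_pow, mul_comm, pow_mul,
      Fin.cycleRange_pow_succ, one_pow, inv_one]

theorem dvd_of_tau_pow_pi_apply_self (hi : i < n) {e : ℕ}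
    (h : (tau r n i ^ e).pi ⟨i, hi⟩ = ⟨i, hi⟩) : i + 1 ∣ e := by
  have h' : (Fin.cycleRange ⟨i, hi⟩ ^ e) ⟨i, hi⟩ = ⟨i, hi⟩ := by
    rw [← tau_pi_inv hi, inv_pow, ← pow_pi]
    exact Perm.inv_eq_iff_eq.mpr h.symm
  have hmod := congrArg Fin.val h'
  rw [Fin.val_cycleRange_pow_of_le le_rfl] at hmod
  refine Nat.modEq_zero_iff_dvd.mp ((Nat.ModEq.refl i).add_iff_left.mp ?_)
  rw [add_zero, Nat.ModEq, hmod, Nat.mod_eq_of_lt (Nat.lt_succ_self i)]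

theorem dvd_of_tau_pow_mem_fixAbove (hi : i < n) {e : ℕ} (h : tau r n i ^ e ∈ fixAbove i) :
    r * (i + 1) ∣ e := by
  obtain ⟨hpi, hc⟩ := h ⟨i, hi⟩ le_rfl
  obtain ⟨q, rfl⟩ := dvd_of_tau_pow_pi_apply_self hi hpi
  rw [mul_comm, tau_pow_mul_succ hi] at hc
  have hrq : r ∣ q := (ZMod.natCast_eq_zero_iff q r).mp (by simpa using hc)
  rw [mul_comm (i + 1)]
  exact Nat.mul_dvd_mul_right hrq _

theorem tau_pow_eq_one_iff (hi : i < n) {e : ℕ} : tau r n i ^ e = 1 ↔ r * (i + 1) ∣ e := by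
  refine ⟨fun h => dvd_of_tau_pow_mem_fixAbove hi (h ▸ one_mem _), ?_⟩
  rintro ⟨t, rfl⟩
  rw [show r * (i + 1) * t = r * t * (i + 1) by ring, tau_pow_mul_succ hi]
  ext j <;> simp

theorem orderOf_tau (hi : i < n) : orderOf (tau r n i) = r * (i + 1) :=
  Nat.dvd_antisymm (orderOf_dvd_of_pow_eq_one ((tau_pow_eq_one_iff hi).mpr dvd_rfl))
    ((tau_pow_eq_one_iff hi).mp (pow_orderOf_eq_one _))

theorem isUniqueProd_tau [NeZero r] :
    IsUniqueProd (fun j : Fin n => tau r n (n - 1 - j.val)) (fun j : Fin n => r * (n - j.val)) := by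
  have hcard : Nat.card (WreathZ r n) = ∏ j : Fin n, r * (n - j) := by
    rw [card_eq, prod_mul_distrib, prod_const, card_univ, Fintype.card_fin,
      Fin.prod_univ_eq_prod_range (n - ·), ← Nat.descFactorial_eq_prod_range,
      Nat.descFactorial_self]
  refine isUniqueProd_of_injective (prodPow_injective _ _ (fun j => fixAbove (n - j))
    (fun _ _ h => fixAbove_mono (by omega)) (fun j => tau_mem_fixAbove (by omega))
    (fun j e h => ?_)) hcard
  have := dvd_of_tau_pow_mem_fixAbove (n := n) (i := n - 1 - j) (by omega)
    (by rwa [show n - (j + 1) = n - 1 - j by omega] at h)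
  rwa [show n - 1 - j + 1 = n - j by omega] at this

end Tau

/-- The sequence `(τ_{n-1}, …, τ_1, τ_0)` is a perfect basis for the
wreath product `G(r,n)`: the order of `τ_i` is `r(i+1)`, and every `π ∈ G(r,n)` has a
unique presentation `π = τ_{n-1}^{k_{n-1}} ⋯ τ_0^{k_0}` with `0 ≤ k_i < r(i+1)`. -/
theorem tau_isPerfectBasis_wreath (r n : ℕ) (hr : 0 < r) (hn : 1 ≤ n) :
    (∀ i : ℕ, i ≤ n - 1 → orderOf (tau r n i) = r * (i + 1)) ∧
    IsUniqueProd (fun j : Fin n => tau r n (n - 1 - j.val))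
      (fun j : Fin n => r * (n - j.val)) ∧
    IsPerfectBasis (fun j : Fin n => tau r n (n - 1 - j.val)) := by
  have : NeZero r := ⟨hr.ne'⟩
  have horder (i : ℕ) (hi : i ≤ n - 1) : orderOf (tau r n i) = r * (i + 1) :=
    orderOf_tau (by omega)
  refine ⟨horder, isUniqueProd_tau, isPerfectBasis_of_isUniqueProd isUniqueProd_tau fun j => ?_⟩
  rw [horder _ (by omega), show n - 1 - j + 1 = n - j by omega]
end

section
/- Let r, p, n be positive integers with p dividing r, and let α ≠ β be integers. If an integer q > 1 divides each of r/p, (n−1)αp − n, and (n−1)βp − n, and gcd(β − α, q) = 1, then q divides gcd(n, p, r/p). -/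
theorem dvd_and_dvd_of_dvd_mul_sub_of_dvd_mul_sub {R : Type*} [CommRing R] {q x a b c : R}
    (ha : q ∣ x * a - c) (hb : q ∣ x * b - c) (hab : IsCoprime q (b - a)) :
    q ∣ x ∧ q ∣ c := by
  have hx : q ∣ x := by
    refine hab.dvd_of_dvd_mul_left ?_
    have hdiff := dvd_sub hb ha
    rwa [show x * b - c - (x * a - c) = (b - a) * x by ring] at hdiff
  refine ⟨hx, ?_⟩
  have hc := dvd_sub (hx.mul_right a) ha
  rwa [sub_sub_cancel] at hc

theorem dvd_of_dvd_of_dvd_sub_one_mul {R : Type*} [CommRing R] {q n p : R}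
    (hn : q ∣ n) (hnp : q ∣ (n - 1) * p) : q ∣ p := by
  have hp := dvd_sub (hn.mul_right p) hnp
  rwa [show n * p - (n - 1) * p = p by ring] at hp

theorem dvd_gcd_of_dvd_linear_combinations_general (r p n : ℕ) (α β : ℤ) (q : ℤ)
    (h1 : q ∣ ((r / p : ℕ) : ℤ))
    (h2 : q ∣ ((n : ℤ) - 1) * α * (p : ℤ) - (n : ℤ))
    (h3 : q ∣ ((n : ℤ) - 1) * β * (p : ℤ) - (n : ℤ))
    (h4 : Int.gcd (β - α) q = 1) :
    q ∣ ((Nat.gcd n (Nat.gcd p (r / p)) : ℕ) : ℤ) := by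
  have hcop : IsCoprime q (β - α) := (Int.isCoprime_iff_gcd_eq_one.mpr h4).symm
  obtain ⟨hnp, hn⟩ := dvd_and_dvd_of_dvd_mul_sub_of_dvd_mul_sub
    (mul_right_comm _ α (p : ℤ) ▸ h2) (mul_right_comm _ β (p : ℤ) ▸ h3) hcop
  have hp := dvd_of_dvd_of_dvd_sub_one_mul hn hnp
  rw [← Int.gcd_natCast_natCast, ← Int.gcd_natCast_natCast]
  exact Int.dvd_coe_gcd hn (Int.dvd_coe_gcd hp h1)

/-- Let `r, p, n` be positive integers with `p ∣ r`, and let `α ≠ β` be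
integers. If an integer `q > 1` divides each of `r/p`, `(n-1)αp - n` and `(n-1)βp - n`,
and `gcd(β - α, q) = 1`, then `q` divides `gcd(n, p, r/p)`. -/
theorem dvd_gcd_of_dvd_linear_combinations (r p n : ℕ) (hr : 0 < r) (hp : 0 < p)
    (hn : 0 < n) (hpr : p ∣ r) (α β : ℤ) (hαβ : α ≠ β) (q : ℤ) (hq : 1 < q)
    (h1 : q ∣ ((r / p : ℕ) : ℤ))
    (h2 : q ∣ ((n : ℤ) - 1) * α * (p : ℤ) - (n : ℤ))
    (h3 : q ∣ ((n : ℤ) - 1) * β * (p : ℤ) - (n : ℤ))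
    (h4 : Int.gcd (β - α) q = 1) :
    q ∣ ((Nat.gcd n (Nat.gcd p (r / p)) : ℕ) : ℤ) :=
  dvd_gcd_of_dvd_linear_combinations_general r p n α β q h1 h2 h3 h4
end

section
/- Let r, p, n be positive integers with p dividing r and gcd(n, p, r/p) = 1. Then there exists an integer α with 0 ≤ α < r/p such that gcd(r/p, (n−1)αp − n) = 1. -/
/-!
Write `m = r/p` and let `X` be the product of the primes dividing `m` but not `n`; take
`α = X mod m`. Modulo a prime `q ∣ m`, either `q ∤ n`, and then `q ∣ α` leaves `-n ≢ 0`; or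
`q ∣ n`, and then `q ∤ α`, while `q ∤ p` because `gcd(n, p, m) = 1`, so `-αp ≢ 0`.
-/

theorem sub_one_mul_mul_sub_ne_zero {R : Type*} [CommRing R] [NoZeroDivisors R] {n x p : R}
    (hx : x = 0 ↔ n ≠ 0) (hp : n = 0 → p ≠ 0) : (n - 1) * x * p - n ≠ 0 := by
  by_cases hn : n = 0
  · simp [hn, hx, hp hn]
  · simp [hx.mpr hn, hn]

theorem Nat.Prime.dvd_prod_primeFactors_filter_iff {m q : ℕ} (P : ℕ → Prop) [DecidablePred P]
    (hq : q.Prime) : q ∣ ∏ q' ∈ m.primeFactors.filter P, q' ↔ q ∈ m.primeFactors ∧ P q := by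
  have hprime : ∀ q' ∈ m.primeFactors.filter P, q'.Prime :=
    fun q' hq' => Nat.prime_of_mem_primeFactors (Finset.mem_filter.mp hq').1
  rw [← Finset.mem_filter]
  conv_rhs => rw [← Nat.primeFactors_prod hprime]
  rw [Nat.mem_primeFactors, and_iff_right hq,
    and_iff_left (Finset.prod_ne_zero_iff.mpr fun q' hq' => (hprime q' hq').ne_zero)]

theorem Int.gcd_natCast_eq_one_of_forall_prime {m : ℕ} {t : ℤ}
    (h : ∀ q : ℕ, q.Prime → q ∣ m → (t : ZMod q) ≠ 0) : Int.gcd m t = 1 :=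
  Nat.coprime_of_dvd fun q hq hqm hqt =>
    h q hq hqm <| (ZMod.intCast_zmod_eq_zero_iff_dvd t q).mpr (Int.natCast_dvd.mpr hqt)

theorem exists_alpha_coprime_general (r p n : ℕ) (hr : 0 < r) (hpr : p ∣ r)
    (hgcd : Nat.gcd n (Nat.gcd p (r / p)) = 1) :
    ∃ α : ℕ, α < r / p ∧
      Int.gcd ((r / p : ℕ) : ℤ) (((n : ℤ) - 1) * (α : ℤ) * (p : ℤ) - (n : ℤ)) = 1 := by
  set m := r / p
  have hm : 0 < m := Nat.div_pos (Nat.le_of_dvd hr hpr) (Nat.pos_of_dvd_of_pos hpr hr)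
  set X := ∏ q ∈ m.primeFactors.filter (¬ · ∣ n), q
  refine ⟨X % m, Nat.mod_lt _ hm, Int.gcd_natCast_eq_one_of_forall_prime fun q hq hqm => ?_⟩
  have : Fact q.Prime := ⟨hq⟩
  have hα : ((X % m : ℕ) : ZMod q) = X := by
    rw [← ZMod.natCast_mod, Nat.mod_mod_of_dvd _ hqm, ZMod.natCast_mod]
  simp only [Int.cast_sub, Int.cast_mul, Int.cast_natCast, Int.cast_one, hα]
  refine sub_one_mul_mul_sub_ne_zero ?_ fun hqn hqp => hq.one_lt.ne' ?_
  · rw [ZMod.natCast_eq_zero_iff, hq.dvd_prod_primeFactors_filter_iff (¬ · ∣ n), ne_eq,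
      ZMod.natCast_eq_zero_iff]
    exact and_iff_right (Nat.mem_primeFactors.mpr ⟨hq, hqm, hm.ne'⟩)
  · rw [ZMod.natCast_eq_zero_iff] at hqn hqp
    exact Nat.eq_one_of_dvd_one (hgcd ▸ Nat.dvd_gcd hqn (Nat.dvd_gcd hqp hqm))

/-- Let `r, p, n` be positive integers with `p ∣ r` and
`gcd(n, p, r/p) = 1`. Then there exists `0 ≤ α < r/p` with
`gcd(r/p, (n-1)αp - n) = 1`. -/
theorem exists_alpha_coprime (r p n : ℕ) (hr : 0 < r) (hp : 0 < p) (hn : 0 < n)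
    (hpr : p ∣ r) (hgcd : Nat.gcd n (Nat.gcd p (r / p)) = 1) :
    ∃ α : ℕ, α < r / p ∧
      Int.gcd ((r / p : ℕ) : ℤ) (((n : ℤ) - 1) * (α : ℤ) * (p : ℤ) - (n : ℤ)) = 1 :=
  exists_alpha_coprime_general r p n hr hpr hgcd
end

section
/- The sequence d = (δ_n, δ_{n−1}, …, δ_1) is a perfect basis for the group D_n of even signed permutations: every w ∈ D_n has a unique presentation w = δ_n^{k_n} δ_{n−1}^{k_{n−1}} ⋯ δ_1^{k_1} with 0 ≤ k_n < n and 0 ≤ k_i < 2i for all 1 ≤ i ≤ n−1, and the order of δ_n is n while the order of δ_i is 2i for 1 ≤ i ≤ n−1. -/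
open scoped Classical

/-- Every element of the subset `A` of the group `G` has a unique presentation
`g = a 0 ^ k 0 * ⋯ * a (n-1) ^ k (n-1)` with `0 ≤ k i < m i`. -/
def IsUniqueProdOn {G : Type*} [Group G] (A : Set G) {n : ℕ} (a : Fin n → G)
    (m : Fin n → ℕ) : Prop :=
  ∀ g ∈ A, ∃! k : (i : Fin n) → Fin (m i), g = prodPow a fun i => (k i : ℕ)


/-- Encoding of the letters `{±1, …, ±n}`: letter `j` is `(⟨j-1⟩, false)` and `-j` is
`(⟨j-1⟩, true)`. -/
abbrev SF (n : ℕ) := Fin n × Bool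

/-- Negation of a letter. -/
def negx {n : ℕ} (x : SF n) : SF n := (x.1, !x.2)

/-- The hyperoctahedral group `B_n`: permutations `w` of `{±1,…,±n}` with `w(-i) = -w(i)`. -/
def BSet (n : ℕ) : Set (Equiv.Perm (SF n)) := {w | ∀ x, w (negx x) = negx (w x)}

/-- `sadj n j` is the Coxeter generator `s_{j+1}` of `B_n`: the signed permutation
exchanging the values `j+1` and `j+2` (1-indexed) as well as `-(j+1)` and `-(j+2)`. -/
def sadj (n j : ℕ) : Equiv.Perm (SF n) :=
  if h : j + 1 < n then
    Equiv.swap (⟨j, Nat.lt_of_succ_lt h⟩, false) (⟨j + 1, h⟩, false) *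
      Equiv.swap (⟨j, Nat.lt_of_succ_lt h⟩, true) (⟨j + 1, h⟩, true)
  else 1

/-- The generator `s_0 = [-1, 2, …, n]` of `B_n`. -/
def s0B (n : ℕ) : Equiv.Perm (SF n) :=
  if h : 0 < n then Equiv.swap (⟨0, h⟩, false) (⟨0, h⟩, true) else 1

/-- The generator `s_0' = [-2, -1, 3, …, n]` of `D_n`. -/
def s0D (n : ℕ) : Equiv.Perm (SF n) :=
  if h : 2 ≤ n then
    Equiv.swap (⟨0, by omega⟩, false) (⟨1, by omega⟩, true) *
      Equiv.swap (⟨1, by omega⟩, false) (⟨0, by omega⟩, true)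
  else 1

/-- The signed permutation `v_n = [1, 2, …, n-1, -n]`. -/
def muP (n : ℕ) : Equiv.Perm (SF n) :=
  if h : 0 < n then Equiv.swap (⟨n - 1, by omega⟩, false) (⟨n - 1, by omega⟩, true) else 1

/-- `betaP n i = β_i = [-i, 1, 2, …, i-1, i+1, …, n] = s_{i-1} ⋯ s_1 s_0`. -/
def betaP (n i : ℕ) : Equiv.Perm (SF n) :=
  ((List.range (i - 1)).reverse.map (sadj n)).prod * s0B n

/-- `deltaP n i = δ_i` for `1 ≤ i ≤ n`: for `i ≤ n-1`,
`δ_i = [-i, 1, 2, …, i-1, i+1, …, n-1, -n] = β_i v_n`, while `δ_n = [n, 1, 2, …, n-1]`. -/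
def deltaP (n i : ℕ) : Equiv.Perm (SF n) :=
  if i = n then ((List.range (n - 1)).reverse.map (sadj n)).prod
  else betaP n i * muP n

/-- The Coxeter generating set `S = {s_0, s_1, …, s_{n-1}}` of `B_n`. -/
def SgenB (n : ℕ) : Set (Equiv.Perm (SF n)) :=
  {w | w = s0B n ∨ ∃ j : ℕ, j + 1 < n ∧ w = sadj n j}

/-- The Coxeter generating set `S' = {s_0', s_1, …, s_{n-1}}` of `D_n`. -/
def SgenD (n : ℕ) : Set (Equiv.Perm (SF n)) :=
  {w | w = s0D n ∨ ∃ j : ℕ, j + 1 < n ∧ w = sadj n j}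

/-- The word length of `g` with respect to a set `S` of generators: the least `l` such
that `g` is a product of `l` elements of `S`. -/
noncomputable def wordLength {G : Type*} [Group G] (S : Set G) (g : G) : ℕ :=
  sInf {l | ∃ w : List G, (∀ x ∈ w, x ∈ S) ∧ w.length = l ∧ w.prod = g}

/-- The group `D_n` of even signed permutations: elements of `B_n` with an even number of
negative entries in their window. -/
def DSet (n : ℕ) : Set (Equiv.Perm (SF n)) :=
  {w | w ∈ BSet n ∧ Even (Finset.univ.filter fun i : Fin n => (w (i, false)).2 = true).card}

/-- The alternating subgroup `B_n^+` of `B_n`: elements of even Coxeter length. -/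
def BplusSet (n : ℕ) : Set (Equiv.Perm (SF n)) :=
  {w | w ∈ BSet n ∧ Even (wordLength (SgenB n) w)}

/-- The bijection `ψ : D_n → B_n^+`: `ψ(w) = w` if `w ∈ B_n^+`, otherwise `ψ(w) = w·v_n`
(negating the last letter of the window of `w`). -/
noncomputable def psiP (n : ℕ) (w : Equiv.Perm (SF n)) : Equiv.Perm (SF n) :=
  if w ∈ BplusSet n then w else w * muP n

/-- The generating set `R = {r_1, …, r_{n-1}}` of `B_n^+`, where `r_1 = [2, -1, 3, …, n]`
and `r_i = [-1, 2, …, i-1, i+1, i, i+2, …, n]` for `2 ≤ i ≤ n-1`; here `r_i = s_0 s_i`. -/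
def RSet (n : ℕ) : Set (Equiv.Perm (SF n)) :=
  {w | ∃ i : ℕ, 1 ≤ i ∧ i ≤ n - 1 ∧ w = s0B n * sadj n (i - 1)}

/-- The set `R ∪ R⁻¹`. -/
def RRinv (n : ℕ) : Set (Equiv.Perm (SF n)) :=
  RSet n ∪ {w | w⁻¹ ∈ RSet n}

/-- The basis `b = (β_n, β_{n-1}, …, β_1)` for `B_n`. -/
def bSeq (n : ℕ) : Fin n → Equiv.Perm (SF n) := fun j => betaP n (n - j.val)

/-- The basis `d = (δ_n, δ_{n-1}, …, δ_1)` for `D_n`. -/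
def dSeq (n : ℕ) : Fin n → Equiv.Perm (SF n) := fun j => deltaP n (n - j.val)

/-- The basis `c = (γ_n, γ_{n-1}, …, γ_1) = (ψ(δ_n), …, ψ(δ_1))` for `B_n^+`. -/
noncomputable def cSeq (n : ℕ) : Fin n → Equiv.Perm (SF n) :=
  fun j => psiP n (deltaP n (n - j.val))

/-- The exponent bounds for the bases `d` and `c`: `k_n < n` and `k_i < 2i` for `i < n`. -/
def mD (n : ℕ) : Fin n → ℕ := fun j => if j.val = 0 then n else 2 * (n - j.val)

/-- The exponent bounds for the basis `b`: `k_i < 2i`. -/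
def mB (n : ℕ) : Fin n → ℕ := fun j => 2 * (n - j.val)


-- stage 1 lemmas
lemma sadj_apply {n i j : ℕ} (hi : i + 1 < n) (hj : j < n) (b : Bool) :
    sadj n i (⟨j, hj⟩, b) =
      if h : j = i then (⟨i+1, hi⟩, b) else if h' : j = i + 1 then (⟨i, by omega⟩, b)
      else (⟨j, hj⟩, b) := by
  rw [sadj, dif_pos hi]
  have hne : ∀ (m : ℕ) (hm : m < n) (b c : Bool), b ≠ c →
      ((⟨m, hm⟩ : Fin n), b) ≠ ((⟨i, by omega⟩ : Fin n), c) := by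
    intro m hm b c hbc h; simp [Prod.ext_iff] at h; exact hbc h.2
  cases b <;>
    simp only [Equiv.Perm.mul_apply, Equiv.swap_apply_def, Prod.mk.injEq, Fin.mk.injEq] <;>
    split_ifs <;> simp_all [Prod.ext_iff, Fin.ext_iff] <;> omega

lemma s0B_apply {n j : ℕ} (hj : j < n) (b : Bool) :
    s0B n (⟨j, hj⟩, b) = if j = 0 then (⟨0, by omega⟩, !b) else (⟨j, hj⟩, b) := by
  rw [s0B, dif_pos (by omega : 0 < n)]
  cases b <;>
    simp only [Equiv.swap_apply_def, Prod.mk.injEq, Fin.mk.injEq] <;>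
    split_ifs <;> simp_all [Prod.ext_iff, Fin.ext_iff] <;> omega

lemma muP_apply {n j : ℕ} (hj : j < n) (b : Bool) :
    muP n (⟨j, hj⟩, b) = if j = n - 1 then (⟨n-1, by omega⟩, !b) else (⟨j, hj⟩, b) := by
  rw [muP, dif_pos (by omega : 0 < n)]
  cases b <;>
    simp only [Equiv.swap_apply_def, Prod.mk.injEq, Fin.mk.injEq] <;>
    split_ifs <;> simp_all [Prod.ext_iff, Fin.ext_iff] <;> omega

/-- the partial cycle `s_{i-1} ⋯ s_0` -/
lemma prodSadj_apply (n i : ℕ) (hi : i < n) (j : ℕ) (hj : j < n) (b : Bool) :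
    ((List.range i).reverse.map (sadj n)).prod (⟨j, hj⟩, b) =
      if j = 0 then (⟨i, hi⟩, b)
      else if j ≤ i then (⟨j - 1, by omega⟩, b) else (⟨j, hj⟩, b) := by
  induction i with
  | zero =>
    simp only [List.range_zero, List.reverse_nil, List.map_nil,
      List.prod_nil, Equiv.Perm.one_apply]
    split_ifs with h h' <;> simp only [Prod.mk.injEq, Fin.mk.injEq] <;> (first | exact ⟨by omega, trivial⟩ | exact ⟨by omega, rfl⟩ | (exfalso; omega))
  | succ i ih =>
    have hin : i + 1 < n := hi
    rw [List.range_succ, List.reverse_append]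
    simp only [List.reverse_cons, List.reverse_nil, List.nil_append, List.map_cons,
      List.singleton_append, List.prod_cons, Equiv.Perm.mul_apply]
    rw [ih (by omega)]
    split_ifs with h h' <;> rw [sadj_apply hin] <;> clear ih <;>
      split_ifs <;> simp only [Prod.mk.injEq, Fin.mk.injEq] <;> (first | exact ⟨by omega, trivial⟩ | exact ⟨by omega, rfl⟩ | (exfalso; omega))

lemma deltaP_top_apply {n j : ℕ} (hn : 1 ≤ n) (hj : j < n) (b : Bool) :
    deltaP n n (⟨j, hj⟩, b) =
      if j = 0 then (⟨n - 1, by omega⟩, b) else (⟨j - 1, by omega⟩, b) := by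
  rw [deltaP, if_pos rfl, prodSadj_apply n (n-1) (by omega)]
  split_ifs with h h' <;> simp only [Prod.mk.injEq, Fin.mk.injEq] <;> (first | exact ⟨by omega, trivial⟩ | exact ⟨by omega, rfl⟩ | (exfalso; omega))

lemma deltaP_low_apply {n t j : ℕ} (ht1 : 1 ≤ t) (ht2 : t ≤ n - 1) (hj : j < n) (b : Bool) :
    deltaP n t (⟨j, hj⟩, b) =
      if j = 0 then (⟨t - 1, by omega⟩, !b)
      else if j ≤ t - 1 then (⟨j - 1, by omega⟩, b)
      else if j = n - 1 then (⟨n - 1, by omega⟩, !b) else (⟨j, hj⟩, b) := by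
  have hn : 2 ≤ n := by omega
  rw [deltaP, if_neg (by omega), betaP, mul_assoc, Equiv.Perm.mul_apply, Equiv.Perm.mul_apply]
  by_cases h1 : j = 0
  · subst h1
    rw [muP_apply, if_neg (by omega), s0B_apply, if_pos rfl,
      prodSadj_apply n (t-1) (by omega), if_pos rfl, if_pos rfl]
  · by_cases h2 : j ≤ t - 1
    · rw [muP_apply, if_neg (by omega), s0B_apply, if_neg h1,
        prodSadj_apply n (t-1) (by omega), if_neg h1, if_pos h2, if_neg h1]
    · by_cases h3 : j = n - 1
      · subst h3
        rw [muP_apply, if_pos rfl, s0B_apply, if_neg (by omega),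
          prodSadj_apply n (t-1) (by omega), if_neg (by omega), if_neg (by omega),
          if_neg h1, if_neg h2]
      · rw [muP_apply, if_neg h3, s0B_apply, if_neg h1,
          prodSadj_apply n (t-1) (by omega), if_neg h1, if_neg h2,
          if_neg h1]

open Equiv.Perm in
lemma pow_idx_preserve {n : ℕ} (f : Equiv.Perm (SF n)) (hn : 1 ≤ n)
    (h : ∀ b : Bool, (f (⟨n-1, by omega⟩, b)).1 = (⟨n-1, by omega⟩ : Fin n)) (k : ℕ) (b : Bool) :
    ((f ^ k) (⟨n-1, by omega⟩, b)).1 = (⟨n-1, by omega⟩ : Fin n) := by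
  induction k with
  | zero => simp
  | succ k ih =>
    have hy : (f ^ k) (⟨n-1, by omega⟩, b) = ((⟨n-1, by omega⟩ : Fin n), ((f ^ k) (⟨n-1, by omega⟩, b)).2) :=
      Prod.ext_iff.mpr ⟨ih, rfl⟩
    rw [pow_succ', Equiv.Perm.mul_apply, hy]
    exact h _

lemma deltaP_top_pow_special {n : ℕ} (hn : 1 ≤ n) (k : ℕ) (hk : k ≤ n) (b : Bool) :
    (deltaP n n ^ k) (⟨n-1, by omega⟩, b) =
      if h : k < n then (⟨n-1-k, by omega⟩, b) else (⟨n-1, by omega⟩, b) := by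
  induction k with
  | zero => rw [pow_zero, dif_pos (by omega)]; rfl
  | succ k ih =>
    rw [pow_succ', Equiv.Perm.mul_apply, ih (by omega), dif_pos (by omega : k < n),
      deltaP_top_apply hn]
    by_cases h0 : n - 1 - k = 0
    · rw [if_pos h0]
      split_ifs with h1 <;> simp only [Prod.mk.injEq, Fin.mk.injEq] <;> (first | exact ⟨by omega, trivial⟩ | exact ⟨by omega, rfl⟩ | (exfalso; omega))
    · rw [if_neg h0]
      split_ifs with h1 <;> simp only [Prod.mk.injEq, Fin.mk.injEq] <;> (first | exact ⟨by omega, trivial⟩ | exact ⟨by omega, rfl⟩ | (exfalso; omega))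

lemma deltaP_top_cover {n j : ℕ} (hn : 1 ≤ n) (hj : j < n) (b : Bool) :
    (deltaP n n ^ (n-1-j)) (⟨n-1, by omega⟩, b) = (⟨j, hj⟩, b) := by
  rw [deltaP_top_pow_special hn _ (by omega), dif_pos (by omega)]
  simp only [Prod.mk.injEq, Fin.mk.injEq]; (first | exact ⟨by omega, trivial⟩ | exact ⟨by omega, rfl⟩ | (exfalso; omega))

lemma deltaP_top_pow_n {n : ℕ} (hn : 1 ≤ n) : deltaP n n ^ n = 1 := by
  apply Equiv.ext
  rintro ⟨⟨j, hj⟩, b⟩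
  rw [Equiv.Perm.one_apply]
  have h1 : (deltaP n n ^ n) (⟨n-1, by omega⟩, b) = (⟨n-1, by omega⟩, b) := by
    rw [deltaP_top_pow_special hn n le_rfl, dif_neg (by omega)]
  calc (deltaP n n ^ n) (⟨j, hj⟩, b)
      = (deltaP n n ^ n) ((deltaP n n ^ (n-1-j)) (⟨n-1, by omega⟩, b)) := by
        rw [deltaP_top_cover hn hj]
    _ = (deltaP n n ^ (n-1-j)) ((deltaP n n ^ n) (⟨n-1, by omega⟩, b)) := by
        rw [← Equiv.Perm.mul_apply, ← Equiv.Perm.mul_apply, ← pow_add, ← pow_add, add_comm]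
    _ = (⟨j, hj⟩, b) := by rw [h1, deltaP_top_cover hn hj]

lemma deltaP_low_pow_special {n t : ℕ} (ht1 : 1 ≤ t) (ht2 : t ≤ n - 1) (k : ℕ) (hk : k ≤ 2*t) :
    (deltaP n t ^ k) (⟨t-1, by omega⟩, false) =
      if h : k < t then (⟨t-1-k, by omega⟩, false)
      else if h : k < 2*t then (⟨2*t-1-k, by omega⟩, true)
      else (⟨t-1, by omega⟩, false) := by
  induction k with
  | zero => rw [pow_zero, dif_pos (by omega)]; rfl
  | succ k ih =>
    rw [pow_succ', Equiv.Perm.mul_apply, ih (by omega)]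
    by_cases h1 : k < t
    · rw [dif_pos h1, deltaP_low_apply ht1 ht2]
      by_cases h0 : t - 1 - k = 0
      · rw [if_pos h0]
        split_ifs with h2 h3 <;> simp only [Prod.mk.injEq, Fin.mk.injEq] <;>
          (first | exact ⟨by omega, trivial⟩ | exact ⟨by omega, rfl⟩ | (exfalso; omega))
      · rw [if_neg h0, if_pos (by omega)]
        split_ifs with h2 h3 <;> simp only [Prod.mk.injEq, Fin.mk.injEq] <;>
          (first | exact ⟨by omega, trivial⟩ | exact ⟨by omega, rfl⟩ | (exfalso; omega))
    · by_cases h2 : k < 2*t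
      · rw [dif_neg h1, dif_pos h2, deltaP_low_apply ht1 ht2]
        by_cases h0 : 2*t - 1 - k = 0
        · rw [if_pos h0]
          split_ifs with h3 h4 <;> simp only [Prod.mk.injEq, Fin.mk.injEq, Bool.not_true] <;>
            (first | exact ⟨by omega, trivial⟩ | exact ⟨by omega, rfl⟩ | (exfalso; omega))
        · rw [if_neg h0, if_pos (by omega)]
          split_ifs with h3 h4 <;> simp only [Prod.mk.injEq, Fin.mk.injEq] <;>
            (first | exact ⟨by omega, trivial⟩ | exact ⟨by omega, rfl⟩ | (exfalso; omega))
      · omega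

lemma deltaP_low_fix {n t j : ℕ} (ht1 : 1 ≤ t) (ht2 : t ≤ n - 1) (hj1 : t ≤ j)
    (hj2 : j ≤ n - 2) (hj : j < n) (b : Bool) :
    deltaP n t (⟨j, hj⟩, b) = (⟨j, hj⟩, b) := by
  rw [deltaP_low_apply ht1 ht2, if_neg (by omega), if_neg (by omega), if_neg (by omega)]

lemma deltaP_low_last {n t : ℕ} (ht1 : 1 ≤ t) (ht2 : t ≤ n - 1) (b : Bool) :
    deltaP n t (⟨n-1, by omega⟩, b) = (⟨n-1, by omega⟩, !b) := by
  rw [deltaP_low_apply ht1 ht2, if_neg (by omega), if_neg (by omega), if_pos rfl]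

lemma deltaP_low_cover {n t j : ℕ} (ht1 : 1 ≤ t) (ht2 : t ≤ n - 1) (hj : j < t) (b : Bool) :
    ∃ m, m < 2*t ∧ (deltaP n t ^ m) (⟨t-1, by omega⟩, false) = ((⟨j, by omega⟩ : Fin n), b) := by
  cases b
  · refine ⟨t-1-j, by omega, ?_⟩
    rw [deltaP_low_pow_special ht1 ht2 _ (by omega), dif_pos (by omega)]
    simp only [Prod.mk.injEq, Fin.mk.injEq]; exact ⟨by omega, trivial⟩
  · refine ⟨2*t-1-j, by omega, ?_⟩
    rw [deltaP_low_pow_special ht1 ht2 _ (by omega), dif_neg (by omega), dif_pos (by omega)]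
    simp only [Prod.mk.injEq, Fin.mk.injEq]; exact ⟨by omega, trivial⟩

lemma deltaP_low_pow_2t {n t : ℕ} (ht1 : 1 ≤ t) (ht2 : t ≤ n - 1) :
    deltaP n t ^ (2*t) = 1 := by
  have hfix : (deltaP n t ^ (2*t)) (⟨t-1, by omega⟩, false) = (⟨t-1, by omega⟩, false) := by
    rw [deltaP_low_pow_special ht1 ht2 _ le_rfl, dif_neg (by omega), dif_neg (by omega)]
  apply Equiv.ext
  rintro ⟨⟨j, hj⟩, b⟩
  rw [Equiv.Perm.one_apply]
  by_cases h1 : j < t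
  · obtain ⟨m, hm, hcov⟩ := deltaP_low_cover ht1 ht2 h1 b
    calc (deltaP n t ^ (2*t)) (⟨j, hj⟩, b)
        = (deltaP n t ^ (2*t)) ((deltaP n t ^ m) (⟨t-1, by omega⟩, false)) := by rw [hcov]
      _ = (deltaP n t ^ m) ((deltaP n t ^ (2*t)) (⟨t-1, by omega⟩, false)) := by
          rw [← Equiv.Perm.mul_apply, ← Equiv.Perm.mul_apply, ← pow_add, ← pow_add, add_comm]
      _ = (⟨j, hj⟩, b) := by rw [hfix, hcov]
  · by_cases h2 : j = n - 1
    · subst h2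
      have h3 : (deltaP n t ^ 2) (⟨n-1, hj⟩, b) = (⟨n-1, hj⟩, b) := by
        rw [pow_two, Equiv.Perm.mul_apply, deltaP_low_last ht1 ht2, deltaP_low_last ht1 ht2,
          Bool.not_not]
      rw [pow_mul]
      exact Equiv.Perm.pow_apply_eq_self_of_apply_eq_self h3 t
    · exact Equiv.Perm.pow_apply_eq_self_of_apply_eq_self
        (deltaP_low_fix ht1 ht2 (by omega) (by omega) hj b) _

lemma orderOf_deltaP_top {n : ℕ} (hn : 1 ≤ n) : orderOf (deltaP n n) = n := by
  rw [orderOf_eq_iff (by omega)]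
  refine ⟨deltaP_top_pow_n hn, fun m hm hm' hne => ?_⟩
  have := Equiv.ext_iff.mp hne (⟨n-1, by omega⟩, false)
  rw [deltaP_top_pow_special hn m (by omega), dif_pos hm, Equiv.Perm.one_apply] at this
  simp only [Prod.mk.injEq, Fin.mk.injEq] at this
  omega

lemma orderOf_deltaP_low {n t : ℕ} (ht1 : 1 ≤ t) (ht2 : t ≤ n - 1) :
    orderOf (deltaP n t) = 2 * t := by
  rw [orderOf_eq_iff (by omega)]
  refine ⟨deltaP_low_pow_2t ht1 ht2, fun m hm hm' hne => ?_⟩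
  have := Equiv.ext_iff.mp hne (⟨t-1, by omega⟩, false)
  rw [deltaP_low_pow_special ht1 ht2 m (by omega), Equiv.Perm.one_apply] at this
  by_cases h1 : m < t
  · rw [dif_pos h1] at this
    simp only [Prod.mk.injEq, Fin.mk.injEq] at this
    omega
  · rw [dif_neg h1, dif_pos hm] at this
    simp only [Prod.mk.injEq, Fin.mk.injEq] at this
    exact absurd this.2 (by simp)

lemma BSet_one {n : ℕ} : (1 : Equiv.Perm (SF n)) ∈ BSet n := fun x => rfl

lemma BSet_mul {n : ℕ} {u v : Equiv.Perm (SF n)} (hu : u ∈ BSet n) (hv : v ∈ BSet n) :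
    u * v ∈ BSet n := fun x => by
  simp only [Equiv.Perm.mul_apply, hv x, hu (v x)]

lemma BSet_pow {n : ℕ} {u : Equiv.Perm (SF n)} (hu : u ∈ BSet n) (k : ℕ) :
    u ^ k ∈ BSet n := by
  induction k with
  | zero => simpa using BSet_one
  | succ k ih => rw [pow_succ]; exact BSet_mul ih hu

lemma deltaP_top_mem_BSet {n : ℕ} (hn : 1 ≤ n) : deltaP n n ∈ BSet n := by
  rintro ⟨⟨j, hj⟩, b⟩
  show deltaP n n (⟨j, hj⟩, !b) = negx (deltaP n n (⟨j, hj⟩, b))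
  rw [deltaP_top_apply hn, deltaP_top_apply hn]
  split_ifs <;> rfl

lemma deltaP_low_mem_BSet {n t : ℕ} (ht1 : 1 ≤ t) (ht2 : t ≤ n - 1) : deltaP n t ∈ BSet n := by
  rintro ⟨⟨j, hj⟩, b⟩
  show deltaP n t (⟨j, hj⟩, !b) = negx (deltaP n t (⟨j, hj⟩, b))
  rw [deltaP_low_apply ht1 ht2, deltaP_low_apply ht1 ht2]
  split_ifs <;> simp [negx]

/-- sign-change count -/
def sgnsum {n : ℕ} (w : Equiv.Perm (SF n)) : ZMod 2 :=
  ∑ i : Fin n, if (w (i, false)).2 = true then 1 else 0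

lemma sgnsum_card {n : ℕ} (w : Equiv.Perm (SF n)) :
    ((Finset.univ.filter fun i : Fin n => (w (i, false)).2 = true).card : ZMod 2) = sgnsum w :=
  Finset.natCast_card_filter _ _

lemma firstIdx_bijective {n : ℕ} {v : Equiv.Perm (SF n)} (hv : v ∈ BSet n) :
    Function.Bijective (fun i : Fin n => (v (i, false)).1) := by
  rw [Finite.injective_iff_bijective.symm]
  intro i i' h
  simp only at h
  by_cases hb : (v (i, false)).2 = (v (i', false)).2
  · have : v (i, false) = v (i', false) := Prod.ext_iff.mpr ⟨h, hb⟩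
    have := v.injective this
    exact (Prod.ext_iff.mp this).1
  · exfalso
    have h2 : v (i', false) = negx (v (i, false)) := by
      have : (v (i', false)).2 = !(v (i, false)).2 := by
        cases hc : (v (i, false)).2 <;> cases hc' : (v (i', false)).2 <;> simp_all
      exact Prod.ext_iff.mpr ⟨h.symm, this⟩
    rw [← hv (i, false)] at h2
    have := v.injective h2.symm
    simp [negx, Prod.ext_iff] at this

lemma sgnsum_mul {n : ℕ} {u v : Equiv.Perm (SF n)} (hu : u ∈ BSet n) (hv : v ∈ BSet n) :
    sgnsum (u * v) = sgnsum u + sgnsum v := by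
  unfold sgnsum
  have key : ∀ i : Fin n, (if ((u * v) (i, false)).2 = true then (1 : ZMod 2) else 0) =
      (if (u ((v (i, false)).1, false)).2 = true then (1 : ZMod 2) else 0) +
      (if (v (i, false)).2 = true then 1 else 0) := by
    intro i
    rw [Equiv.Perm.mul_apply]
    rcases hc : v (i, false) with ⟨j, c⟩
    cases c
    · simp
    · have : u (j, true) = negx (u (j, false)) := hu (j, false)
      rw [this]
      rcases hd : u (j, false) with ⟨j', d⟩
      cases d <;> simp [negx] <;> rfl
  rw [Finset.sum_congr rfl fun i _ => key i, Finset.sum_add_distrib]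
  congr 1
  exact Fintype.sum_bijective _ (firstIdx_bijective hv)
    (fun i => if (u ((v (i, false)).1, false)).2 = true then (1 : ZMod 2) else 0)
    (fun j => if (u (j, false)).2 = true then (1 : ZMod 2) else 0)
    (fun i => rfl)

lemma mem_DSet_iff {n : ℕ} {w : Equiv.Perm (SF n)} :
    w ∈ DSet n ↔ w ∈ BSet n ∧ sgnsum w = 0 := by
  unfold DSet
  rw [Set.mem_setOf_eq, ← sgnsum_card, ZMod.natCast_eq_zero_iff,
    Nat.even_iff, Nat.dvd_iff_mod_eq_zero]

lemma DSet_one {n : ℕ} : (1 : Equiv.Perm (SF n)) ∈ DSet n := by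
  rw [mem_DSet_iff]
  refine ⟨BSet_one, ?_⟩
  unfold sgnsum
  simp

lemma DSet_mul {n : ℕ} {u v : Equiv.Perm (SF n)} (hu : u ∈ DSet n) (hv : v ∈ DSet n) :
    u * v ∈ DSet n := by
  rw [mem_DSet_iff] at *
  exact ⟨BSet_mul hu.1 hv.1, by rw [sgnsum_mul hu.1 hv.1, hu.2, hv.2, add_zero]⟩

lemma DSet_pow {n : ℕ} {u : Equiv.Perm (SF n)} (hu : u ∈ DSet n) (k : ℕ) :
    u ^ k ∈ DSet n := by
  induction k with
  | zero => simpa using DSet_one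
  | succ k ih => rw [pow_succ]; exact DSet_mul ih hu

lemma deltaP_top_mem_DSet {n : ℕ} (hn : 1 ≤ n) : deltaP n n ∈ DSet n := by
  rw [mem_DSet_iff]
  refine ⟨deltaP_top_mem_BSet hn, ?_⟩
  unfold sgnsum
  apply Finset.sum_eq_zero
  rintro ⟨j, hj⟩ _
  rw [deltaP_top_apply hn]
  split_ifs <;> simp_all

lemma deltaP_low_mem_DSet {n t : ℕ} (ht1 : 1 ≤ t) (ht2 : t ≤ n - 1) : deltaP n t ∈ DSet n := by
  rw [mem_DSet_iff]
  refine ⟨deltaP_low_mem_BSet ht1 ht2, ?_⟩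
  unfold sgnsum
  have key : ∀ i : Fin n, (if (deltaP n t (i, false)).2 = true then (1 : ZMod 2) else 0) =
      (if i = (⟨0, by omega⟩ : Fin n) then 1 else 0) +
      (if i = (⟨n-1, by omega⟩ : Fin n) then 1 else 0) := by
    rintro ⟨j, hj⟩
    rw [deltaP_low_apply ht1 ht2]
    split_ifs with h1 h2 h3 <;> simp_all [Fin.ext_iff] <;> omega
  rw [Finset.sum_congr rfl fun i _ => key i, Finset.sum_add_distrib]
  simp only [Finset.sum_ite_eq', Finset.mem_univ, if_pos]
  decide

def tailProd {G : Type*} [Group G] {n : ℕ} (a : Fin n → G) (k : Fin n → ℕ) (j : ℕ) : G :=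
  if h : j < n then a ⟨j, h⟩ ^ k ⟨j, h⟩ * tailProd a k (j+1) else 1
termination_by n - j

lemma tailProd_of_lt {G : Type*} [Group G] {n : ℕ} (a : Fin n → G) (k : Fin n → ℕ) {j : ℕ}
    (h : j < n) : tailProd a k j = a ⟨j, h⟩ ^ k ⟨j, h⟩ * tailProd a k (j+1) := by
  rw [tailProd, dif_pos h]

lemma tailProd_of_ge {G : Type*} [Group G] {n : ℕ} (a : Fin n → G) (k : Fin n → ℕ) {j : ℕ}
    (h : ¬ j < n) : tailProd a k j = 1 := by
  rw [tailProd, dif_neg h]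

lemma prodPow_eq_tailProd {G : Type*} [Group G] {n : ℕ} (a : Fin n → G) (k : Fin n → ℕ) :
    prodPow a k = tailProd a k 0 := by
  suffices h : ∀ d j, n - j = d → ((List.ofFn fun i => a i ^ k i).drop j).prod = tailProd a k j by
    simpa [prodPow] using h n 0 rfl
  intro d
  induction d with
  | zero =>
    intro j hj
    rw [List.drop_eq_nil_of_le (by simp; omega), tailProd_of_ge _ _ (by omega)]
    rfl
  | succ d ih =>
    intro j hj
    have hjn : j < n := by omega
    rw [List.drop_eq_getElem_cons (by simpa using hjn), List.prod_cons,
      List.getElem_ofFn, ih (j+1) (by omega), tailProd_of_lt _ _ hjn]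

lemma tailProd_congr {G : Type*} [Group G] {n : ℕ} (a : Fin n → G) (k k' : Fin n → ℕ) (j : ℕ)
    (h : ∀ i : Fin n, j ≤ i.val → k i = k' i) : tailProd a k j = tailProd a k' j := by
  suffices hs : ∀ d j, n - j = d → (∀ i : Fin n, j ≤ i.val → k i = k' i) →
      tailProd a k j = tailProd a k' j from hs (n - j) j rfl h
  intro d
  induction d with
  | zero =>
    intro j hj _
    rw [tailProd_of_ge _ _ (by omega), tailProd_of_ge _ _ (by omega)]
  | succ d ih =>
    intro j hj hkk
    have hjn : j < n := by omega
    rw [tailProd_of_lt _ _ hjn, tailProd_of_lt _ _ hjn, hkk ⟨j, hjn⟩ le_rfl,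
      ih (j+1) (by omega) (fun i hi => hkk i (by omega))]

lemma tailProd_fix {α : Type*} {n : ℕ} (a : Fin n → Equiv.Perm α) (k : Fin n → ℕ) (j : ℕ)
    (x : α) (h : ∀ i : Fin n, j ≤ i.val → a i x = x) : tailProd a k j x = x := by
  suffices hs : ∀ d j, n - j = d → (∀ i : Fin n, j ≤ i.val → a i x = x) →
      tailProd a k j x = x from hs (n - j) j rfl h
  intro d
  induction d with
  | zero => intro j hj _; rw [tailProd_of_ge _ _ (by omega)]; rfl
  | succ d ih =>
    intro j hj hfix
    have hjn : j < n := by omega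
    rw [tailProd_of_lt _ _ hjn, Equiv.Perm.mul_apply, ih (j+1) (by omega)
      (fun i hi => hfix i (by omega)),
      Equiv.Perm.pow_apply_eq_self_of_apply_eq_self (hfix ⟨j, hjn⟩ le_rfl)]

lemma tailProd_idx_preserve {n : ℕ} (hn : 1 ≤ n) (a : Fin n → Equiv.Perm (SF n))
    (k : Fin n → ℕ) (j : ℕ)
    (h : ∀ i : Fin n, j ≤ i.val → ∀ b : Bool, ((a i) (⟨n-1, by omega⟩, b)).1 = (⟨n-1, by omega⟩ : Fin n)) :
    ∀ b : Bool, ((tailProd a k j) (⟨n-1, by omega⟩, b)).1 = (⟨n-1, by omega⟩ : Fin n) := by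
  suffices hs : ∀ d j, n - j = d →
      (∀ i : Fin n, j ≤ i.val → ∀ b : Bool, ((a i) (⟨n-1, by omega⟩, b)).1 = (⟨n-1, by omega⟩ : Fin n)) →
      ∀ b : Bool, ((tailProd a k j) (⟨n-1, by omega⟩, b)).1 = (⟨n-1, by omega⟩ : Fin n) from
    hs (n - j) j rfl h
  intro d
  induction d with
  | zero => intro j hj _ b; rw [tailProd_of_ge _ _ (by omega)]; rfl
  | succ d ih =>
    intro j hj hpres b
    have hjn : j < n := by omega
    rw [tailProd_of_lt _ _ hjn, Equiv.Perm.mul_apply]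
    have htail := ih (j+1) (by omega) (fun i hi => hpres i (by omega)) b
    have hy : (tailProd a k (j+1)) (⟨n-1, by omega⟩, b) =
        ((⟨n-1, by omega⟩ : Fin n), ((tailProd a k (j+1)) (⟨n-1, by omega⟩, b)).2) :=
      Prod.ext_iff.mpr ⟨htail, rfl⟩
    rw [hy]
    exact pow_idx_preserve _ hn (hpres ⟨j, hjn⟩ le_rfl) _ _

lemma tail_unique (n : ℕ) (hn : 1 ≤ n) : ∀ d j, n - j = d → ∀ (k k' : Fin n → ℕ),
    (∀ i, k i < mD n i) → (∀ i, k' i < mD n i) →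
    tailProd (dSeq n) k j = tailProd (dSeq n) k' j → ∀ i : Fin n, j ≤ i.val → k i = k' i := by
  intro d
  induction d with
  | zero => intro j hj k k' _ _ _ i hi; exfalso; have := i.isLt; omega
  | succ d ih =>
    intro j hj k k' hk hk' heq i hi
    have hjn : j < n := by omega
    have hdseq : dSeq n ⟨j, hjn⟩ = deltaP n (n - j) := rfl
    rw [tailProd_of_lt _ _ hjn, tailProd_of_lt _ _ hjn] at heq
    by_cases hj0 : j = 0
    · subst hj0
      -- top case : t = n
      have hnj : n - 0 = n := by omega
      rw [hdseq, hnj] at heq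
      have hpres : ∀ (kk : Fin n → ℕ) (b : Bool),
          ((tailProd (dSeq n) kk 1) (⟨n-1, by omega⟩, b)).1 = (⟨n-1, by omega⟩ : Fin n) := by
        intro kk b
        refine tailProd_idx_preserve hn _ _ _ (fun i hi b => ?_) b
        have h1 : 1 ≤ n - i.val := by have := i.isLt; omega
        have h2 : n - i.val ≤ n - 1 := by omega
        show ((deltaP n (n - i.val)) (⟨n-1, by omega⟩, b)).1 = _
        rw [deltaP_low_last h1 h2]
      have hx := Equiv.ext_iff.mp heq (⟨n-1, by omega⟩, false)
      rw [Equiv.Perm.mul_apply, Equiv.Perm.mul_apply] at hx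
      have hyA : (tailProd (dSeq n) k 1) (⟨n-1, by omega⟩, false) =
          ((⟨n-1, by omega⟩ : Fin n), ((tailProd (dSeq n) k 1) (⟨n-1, by omega⟩, false)).2) :=
        Prod.ext_iff.mpr ⟨hpres k false, rfl⟩
      have hyB : (tailProd (dSeq n) k' 1) (⟨n-1, by omega⟩, false) =
          ((⟨n-1, by omega⟩ : Fin n), ((tailProd (dSeq n) k' 1) (⟨n-1, by omega⟩, false)).2) :=
        Prod.ext_iff.mpr ⟨hpres k' false, rfl⟩
      have hk0 : k ⟨0, hjn⟩ < n := by have := hk ⟨0, hjn⟩; simpa [mD] using this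
      have hk0' : k' ⟨0, hjn⟩ < n := by have := hk' ⟨0, hjn⟩; simpa [mD] using this
      rw [hyA, hyB] at hx
      have hBS : ∀ (m : ℕ) (hm : m < n) (b : Bool),
          (deltaP n n ^ m) (⟨n-1, by omega⟩, b) = (⟨n-1-m, by omega⟩, b) := by
        intro m hm b
        rw [deltaP_top_pow_special hn m (by omega), dif_pos hm]
      rw [hBS _ hk0, hBS _ hk0'] at hx
      have hxx := Prod.ext_iff.mp hx
      simp only [Fin.mk.injEq] at hxx
      have hkk0 : k ⟨0, hjn⟩ = k' ⟨0, hjn⟩ := by omega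
      by_cases hi0 : i.val = 0
      · have : i = ⟨0, hjn⟩ := Fin.ext hi0
        rw [this]; exact hkk0
      · rw [hkk0] at heq
        have htails := mul_left_cancel heq
        exact ih 1 (by omega) k k' hk hk' htails i (by omega)
    · -- low case : t = n - j ≤ n - 1
      set t := n - j with ht
      have ht1 : 1 ≤ t := by omega
      have ht2 : t ≤ n - 1 := by omega
      have hx := Equiv.ext_iff.mp heq (⟨t-1, by omega⟩, false)
      rw [Equiv.Perm.mul_apply, Equiv.Perm.mul_apply] at hx
      have hfixtail : ∀ (kk : Fin n → ℕ),
          (tailProd (dSeq n) kk (j+1)) (⟨t-1, by omega⟩, false) = (⟨t-1, by omega⟩, false) := by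
        intro kk
        refine tailProd_fix _ _ _ _ (fun i hi => ?_)
        have h1 : 1 ≤ n - i.val := by have := i.isLt; omega
        show (deltaP n (n - i.val)) (⟨t-1, by omega⟩, false) = _
        exact deltaP_low_fix h1 (by omega) (by omega) (by omega) _ false
      rw [hdseq] at hx
      rw [hfixtail k, hfixtail k'] at hx
      have hkj : k ⟨j, hjn⟩ < 2*t := by
        have := hk ⟨j, hjn⟩; simp only [mD, if_neg hj0] at this; omega
      have hkj' : k' ⟨j, hjn⟩ < 2*t := by
        have := hk' ⟨j, hjn⟩; simp only [mD, if_neg hj0] at this; omega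
      rw [deltaP_low_pow_special ht1 ht2 _ (by omega),
        deltaP_low_pow_special ht1 ht2 _ (by omega)] at hx
      have hkkj : k ⟨j, hjn⟩ = k' ⟨j, hjn⟩ := by
        by_cases c1 : k ⟨j, hjn⟩ < t <;> by_cases c2 : k' ⟨j, hjn⟩ < t
        · rw [dif_pos c1, dif_pos c2] at hx
          have := Prod.ext_iff.mp hx; simp only [Fin.mk.injEq] at this; omega
        · rw [dif_pos c1, dif_neg c2, dif_pos hkj'] at hx
          have := (Prod.ext_iff.mp hx).2; simp at this
        · rw [dif_neg c1, dif_pos hkj, dif_pos c2] at hx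
          have := (Prod.ext_iff.mp hx).2; simp at this
        · rw [dif_neg c1, dif_pos hkj, dif_neg c2, dif_pos hkj'] at hx
          have := Prod.ext_iff.mp hx; simp only [Fin.mk.injEq] at this; omega
      by_cases hij : i.val = j
      · have : i = ⟨j, hjn⟩ := Fin.ext hij
        rw [this]; exact hkkj
      · rw [hdseq] at heq
        rw [hkkj] at heq
        have htails := mul_left_cancel heq
        exact ih (j+1) (by omega) k k' hk hk' htails i (by omega)

lemma idx_cases {n : ℕ} (z : SF n) (v : ℕ) (hv : v < n) (hz : z.1.val = v) :
    z = (⟨v, hv⟩, false) ∨ z = (⟨v, hv⟩, true) := by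
  obtain ⟨⟨u, hu⟩, b⟩ := z
  have huv : u = v := hz
  cases b
  · left; exact Prod.ext_iff.mpr ⟨Fin.mk_eq_mk.mpr huv, rfl⟩
  · right; exact Prod.ext_iff.mpr ⟨Fin.mk_eq_mk.mpr huv, rfl⟩

lemma exist_low (n : ℕ) (hn : 1 ≤ n) : ∀ t, t ≤ n - 1 → ∀ w, w ∈ DSet n →
    (∀ x : SF n, t ≤ x.1.val → x.1.val ≤ n-2 → x.1.val ≠ n-1 → w x = x) →
    (∀ b : Bool, (w (⟨n-1, by omega⟩, b)).1 = (⟨n-1, by omega⟩ : Fin n)) →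
    ∃ k : Fin n → ℕ, (∀ i, k i < mD n i) ∧ tailProd (dSeq n) k (n - t) = w := by
  intro t
  induction t with
  | zero =>
    intro _ w hw hfix hpres
    refine ⟨fun _ => 0, fun i => by simp only [mD]; split <;> omega, ?_⟩
    rw [Nat.sub_zero, tailProd_of_ge _ _ (by omega)]
    have hBS := (mem_DSet_iff.mp hw).1
    have hsgn := (mem_DSet_iff.mp hw).2
    set c := (w (⟨n-1, by omega⟩, false)).2 with hc
    have hwlast : w (⟨n-1, by omega⟩, false) = (⟨n-1, by omega⟩, c) :=
      Prod.ext_iff.mpr ⟨hpres false, rfl⟩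
    have hcfalse : c = false := by
      by_contra hcT
      have hct : c = true := (Bool.eq_false_or_eq_true c).resolve_right hcT
      have hone : sgnsum w = 1 := by
        unfold sgnsum
        have key : ∀ i : Fin n, (if (w (i, false)).2 = true then (1 : ZMod 2) else 0) =
            (if i = (⟨n-1, by omega⟩ : Fin n) then 1 else 0) := by
          rintro ⟨v, hv⟩
          by_cases hvn : v = n - 1
          · have hfe : (⟨v, hv⟩ : Fin n) = ⟨n-1, by omega⟩ := Fin.mk_eq_mk.mpr hvn
            rw [if_pos hfe, hfe, hwlast, hct]
            rfl
          · have h1 : w (⟨v, hv⟩, false) = (⟨v, hv⟩, false) :=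
              hfix _ (by omega) (show v ≤ n - 2 by omega) hvn
            rw [h1, if_neg (fun hf => hvn (Fin.mk_eq_mk.mp hf))]
            rfl
        rw [Finset.sum_congr rfl fun i _ => key i]
        simp
      rw [hsgn] at hone
      exact absurd hone.symm one_ne_zero
    symm
    apply Equiv.ext
    intro x
    rw [Equiv.Perm.one_apply]
    by_cases hxi : x.1.val = n - 1
    · rcases idx_cases x (n-1) (by omega) hxi with h | h
      · rw [h, hwlast, hcfalse]
      · rw [h]
        have hneg : w (⟨n-1, by omega⟩, true) = negx (w (⟨n-1, by omega⟩, false)) :=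
          hBS (⟨n-1, by omega⟩, false)
        rw [hneg, hwlast, hcfalse]
        rfl
    · exact hfix x (by omega) (by have := x.1.isLt; omega) hxi
  | succ t ih =>
    intro htn w hw hfix hpres
    have hBS := (mem_DSet_iff.mp hw).1
    have htn' : t + 1 < n := by omega
    set x₀ : SF n := (⟨t, by omega⟩, false) with hx₀
    set q := w x₀ with hq
    have hxv : x₀.1.val = t := rfl
    have hq1 : q.1.val ≤ t := by
      by_contra hc
      push_neg at hc
      by_cases hqm : q.1.val ≤ n - 2
      · have hfq : w q = q := hfix q (by omega) hqm (by omega)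
        have hxq : x₀ = q := w.injective (by rw [hfq, ← hq])
        have hv : x₀.1.val = q.1.val := by rw [hxq]
        rw [hxv] at hv
        omega
      · have hqn : q.1.val = n - 1 := by have := q.1.isLt; omega
        set y₁ : SF n := (⟨n-1, by omega⟩, false) with hy₁
        set y₂ : SF n := (⟨n-1, by omega⟩, true) with hy₂
        have hy₁v : y₁.1.val = n - 1 := rfl
        have hy₂v : y₂.1.val = n - 1 := rfl
        have hwy1 : w y₁ = y₁ ∨ w y₁ = y₂ :=
          idx_cases _ (n-1) (by omega) (by rw [hpres false])
        have hwy2 : w y₂ = y₁ ∨ w y₂ = y₂ :=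
          idx_cases _ (n-1) (by omega) (by rw [hpres true])
        have hqy : q = y₁ ∨ q = y₂ := idx_cases q (n-1) (by omega) hqn
        have hne : w y₁ ≠ w y₂ := fun h => by
          have h12 := w.injective h
          have : y₁.2 = y₂.2 := by rw [h12]
          simp [hy₁, hy₂] at this
        have hfalse : ∀ y : SF n, y.1.val = n - 1 → x₀ = y → False := by
          intro y hyv hxy
          have hv : x₀.1.val = y.1.val := by rw [hxy]
          rw [hxv, hyv] at hv
          omega
        rcases hqy with h | h
        · rcases hwy1 with h1 | h1
          · exact hfalse y₁ hy₁v (w.injective (by rw [h1, ← hq, h]))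
          · rcases hwy2 with h2 | h2
            · exact hfalse y₂ hy₂v (w.injective (by rw [h2, ← hq, h]))
            · exact hne (h1.trans h2.symm)
        · rcases hwy1 with h1 | h1
          · rcases hwy2 with h2 | h2
            · exact hne (h1.trans h2.symm)
            · exact hfalse y₂ hy₂v (w.injective (by rw [h2, ← hq, h]))
          · exact hfalse y₁ hy₁v (w.injective (by rw [h1, ← hq, h]))
    obtain ⟨m, hm, hcov⟩ := deltaP_low_cover (show 1 ≤ t+1 by omega) htn
      (show q.1.val < t+1 by omega) q.2
    have hcov' : (deltaP n (t+1) ^ m) x₀ = q := by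
      rw [show ((⟨t+1-1, by omega⟩ : Fin n), false) = x₀ from rfl] at hcov
      rw [hcov, Fin.eta]
    set T := 2*(t+1) with hT
    set δ := deltaP n (t+1) with hδ
    have hδD : δ ∈ DSet n := deltaP_low_mem_DSet (by omega) htn
    have hδ2T : δ ^ T = 1 := deltaP_low_pow_2t (by omega) htn
    set w' := δ ^ (T - m) * w with hw'
    have hw'D : w' ∈ DSet n := DSet_mul (DSet_pow hδD _) hw
    have hw'BS := (mem_DSet_iff.mp hw'D).1
    have hw'x₀ : w' x₀ = x₀ := by
      rw [hw', Equiv.Perm.mul_apply, ← hq, ← hcov', ← Equiv.Perm.mul_apply, ← pow_add,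
        show T - m + m = T by omega, hδ2T, Equiv.Perm.one_apply]
    have hfix' : ∀ x : SF n, t ≤ x.1.val → x.1.val ≤ n-2 → x.1.val ≠ n-1 → w' x = x := by
      intro x hx1 hx2 hx3
      by_cases hxt : x.1.val = t
      · rcases idx_cases x t (by omega) hxt with h | h
        · rw [h]; exact hw'x₀
        · rw [h, show ((⟨t, by omega⟩ : Fin n), true) = negx x₀ from rfl, hw'BS x₀, hw'x₀]
      · have hxw : w x = x := hfix x (by omega) hx2 hx3
        rw [hw', Equiv.Perm.mul_apply, hxw]
        refine Equiv.Perm.pow_apply_eq_self_of_apply_eq_self ?_ _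
        rcases x with ⟨⟨v, hv⟩, b⟩
        have hx1' : t ≤ v := hx1
        have hx2' : v ≤ n - 2 := hx2
        have hxt' : ¬ v = t := hxt
        exact deltaP_low_fix (by omega) htn (by omega) (by omega) hv b
    have hpres' : ∀ b : Bool, (w' (⟨n-1, by omega⟩, b)).1 = (⟨n-1, by omega⟩ : Fin n) := by
      intro b
      rw [hw', Equiv.Perm.mul_apply]
      have h1 : w (⟨n-1, by omega⟩, b) = ((⟨n-1, by omega⟩ : Fin n), (w (⟨n-1, by omega⟩, b)).2) :=
        Prod.ext_iff.mpr ⟨hpres b, rfl⟩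
      rw [h1]
      exact pow_idx_preserve _ hn
        (fun b => by rw [hδ, deltaP_low_last (by omega) htn]) _ _
    obtain ⟨k, hkb, hkeq⟩ := ih (by omega) w' hw'D hfix' hpres'
    have hj₀ : n - (t+1) < n := by omega
    set i₀ : Fin n := ⟨n - (t+1), hj₀⟩ with hi₀
    classical
    set k'' := Function.update k i₀ m with hk''
    refine ⟨k'', fun i => ?_, ?_⟩
    · by_cases hii : i = i₀
      · subst hii
        rw [hk'', Function.update_self]
        show m < if i₀.val = 0 then n else 2 * (n - i₀.val)
        rw [if_neg (show ¬ (i₀.val = 0) from by rw [hi₀]; simp; omega)]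
        have : n - i₀.val = t + 1 := by rw [hi₀]; simp; omega
        rw [this]
        omega
      · rw [hk'', Function.update_of_ne hii]
        exact hkb i
    · rw [tailProd_of_lt _ _ hj₀]
      have hds : dSeq n ⟨n - (t+1), hj₀⟩ = δ := by
        show deltaP n (n - (n - (t+1))) = δ
        rw [hδ]
        congr 1
        omega
      have hupd : k'' ⟨n - (t+1), hj₀⟩ = m := by
        rw [show (⟨n - (t+1), hj₀⟩ : Fin n) = i₀ from rfl, hk'', Function.update_self]
      have htail : tailProd (dSeq n) k'' (n - (t+1) + 1) = w' := by
        rw [tailProd_congr (dSeq n) k'' k _ (fun i hi => by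
          rw [hk'', Function.update_of_ne (by
            intro h
            rw [h, hi₀] at hi
            exact Nat.not_succ_le_self _ hi)]),
          show n - (t+1) + 1 = n - t by omega]
        exact hkeq
      rw [hds, hupd, htail, hw', ← mul_assoc, ← pow_add, show m + (T - m) = T by omega,
        hδ2T, one_mul]

lemma exist_top (n : ℕ) (hn : 1 ≤ n) (w : Equiv.Perm (SF n)) (hw : w ∈ DSet n) :
    ∃ k : Fin n → ℕ, (∀ i, k i < mD n i) ∧ tailProd (dSeq n) k 0 = w := by
  have hBS := (mem_DSet_iff.mp hw).1
  have hlast : n - 1 < n := by omega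
  set y : SF n := (⟨n-1, hlast⟩, false) with hy
  obtain ⟨m, hm⟩ : ∃ m', m' = n - 1 - (w y).1.val := ⟨_, rfl⟩
  have hmn : m < n := by omega
  have hnm : n - m + m = n := by omega
  have hcov : (deltaP n n ^ m) (⟨n-1, hlast⟩, (w y).2) = w y := by
    rw [hm, deltaP_top_cover hn (w y).1.isLt (w y).2, Fin.eta]
  have hpn : deltaP n n ^ n = 1 := deltaP_top_pow_n hn
  have hDn : deltaP n n ∈ DSet n := deltaP_top_mem_DSet hn
  set w₁ := deltaP n n ^ (n - m) * w with hw₁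
  have hw₁D : w₁ ∈ DSet n := DSet_mul (DSet_pow hDn _) hw
  have hw₁BS := (mem_DSet_iff.mp hw₁D).1
  have hw₁y : w₁ y = (⟨n-1, hlast⟩, (w y).2) := by
    rw [hw₁, Equiv.Perm.mul_apply]
    conv_lhs => rw [← hcov, ← Equiv.Perm.mul_apply, ← pow_add, hnm, hpn]
    rfl
  have hpres : ∀ b : Bool, (w₁ (⟨n-1, hlast⟩, b)).1 = (⟨n-1, hlast⟩ : Fin n) := by
    intro b
    cases b
    · rw [show ((⟨n-1, hlast⟩ : Fin n), false) = y from rfl, hw₁y]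
    · rw [show ((⟨n-1, hlast⟩ : Fin n), true) = negx y from rfl, hw₁BS y, hw₁y]
      rfl
  obtain ⟨k, hkb, hkeq⟩ := exist_low n hn (n-1) le_rfl w₁ hw₁D
    (fun x hx1 hx2 hx3 => absurd (show x.1.val = n-1 from by have := x.1.isLt; omega) hx3)
    hpres
  rw [show n - (n-1) = 1 by omega] at hkeq
  have h0n : (0:ℕ) < n := hn
  classical
  set i₀ : Fin n := ⟨0, h0n⟩ with hi₀
  set k'' := Function.update k i₀ m with hk''
  refine ⟨k'', fun i => ?_, ?_⟩
  · by_cases hii : i = i₀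
    · subst hii
      rw [hk'', Function.update_self]
      show m < if i₀.val = 0 then n else 2 * (n - i₀.val)
      rw [if_pos rfl]
      exact hmn
    · rw [hk'', Function.update_of_ne hii]
      exact hkb i
  · rw [tailProd_of_lt _ _ h0n]
    have hds : dSeq n ⟨0, h0n⟩ = deltaP n n := rfl
    have hupd : k'' ⟨0, h0n⟩ = m := by
      rw [show (⟨0, h0n⟩ : Fin n) = i₀ from rfl, hk'', Function.update_self]
    have htail : tailProd (dSeq n) k'' 1 = w₁ := by
      rw [tailProd_congr (dSeq n) k'' k _ (fun i hi => by
        rw [hk'', Function.update_of_ne (by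
          intro h
          rw [h, hi₀] at hi
          exact Nat.not_succ_le_self 0 hi)])]
      exact hkeq
    rw [hds, hupd, htail, hw₁, ← mul_assoc, ← pow_add, show m + (n - m) = n by omega,
      hpn, one_mul]


/-- The sequence `d = (δ_n, δ_{n-1}, …, δ_1)` is a perfect basis for
the group `D_n` of even signed permutations: each `δ_i` lies in `D_n`, the order of `δ_n`
is `n` while the order of `δ_i` is `2i` for `i ≤ n-1`, and every `w ∈ D_n` has a unique
presentation `w = δ_n^{k_n} ⋯ δ_1^{k_1}` with `0 ≤ k_n < n` and `0 ≤ k_i < 2i`. -/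
theorem delta_isPerfectBasis_evenSigned (n : ℕ) (hn : 1 ≤ n) :
    (∀ j : Fin n, dSeq n j ∈ DSet n) ∧
    orderOf (deltaP n n) = n ∧
    (∀ i : ℕ, 1 ≤ i → i ≤ n - 1 → orderOf (deltaP n i) = 2 * i) ∧
    IsUniqueProdOn (DSet n) (dSeq n) (mD n) := by
  refine ⟨?_, orderOf_deltaP_top hn, fun i hi1 hi2 => orderOf_deltaP_low hi1 hi2, ?_⟩
  · intro j
    show deltaP n (n - j.val) ∈ DSet n
    by_cases hj : j.val = 0
    · rw [hj, Nat.sub_zero]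
      exact deltaP_top_mem_DSet hn
    · exact deltaP_low_mem_DSet (by have := j.isLt; omega) (by omega)
  · intro g hg
    obtain ⟨k, hkb, hkeq⟩ := exist_top n hn g hg
    refine ⟨fun i => ⟨k i, hkb i⟩, ?_, ?_⟩
    · show g = prodPow (dSeq n) _
      rw [prodPow_eq_tailProd]
      exact hkeq.symm
    · intro y hy
      funext i
      apply Fin.ext
      show (y i).val = k i
      refine tail_unique n hn n 0 rfl (fun i => (y i).val) k
        (fun i => (y i).isLt) hkb ?_ i (Nat.zero_le _)
      rw [← prodPow_eq_tailProd, ← hy]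
      exact hkeq.symm
end
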